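/- arXiv:1706.10023 — 4 statements merged into one kernel-verified Lean document; each statement's English description precedes it below -/
import Mathlib

section
/- Let X be a cosimplicial object in a category of set-valued presheaves that is unaugmentable, meaning the equalizer of the two coface maps X^{δ⁰}, X^{δ¹} : X⁰ ⇉ X¹ is the empty (initial) presheaf. Then every latching map L_n X → X^n of X is a monomorphism. -/
set_option maxHeartbeats 1000000

open CategoryTheory Limits

universe w v u

noncomputable section

/-- The latching category at `n : SimplexCategory`: the full subcategory of the
slice `Δ/[n]` spanned by the non-invertible monomorphisms `[k] ↪ [n]`. -/
def LatchIndex (n : SimplexCategory) : Type :=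
  ObjectProperty.FullSubcategory (fun f : Over n => Mono f.hom ∧ ¬ IsIso f.hom)

instance (n : SimplexCategory) : Category (LatchIndex n) :=
  (inferInstance : Category (ObjectProperty.FullSubcategory _))

variable {C : Type u} [Category.{v} C]

/-- The diagram whose colimit is the `n`-th latching object of a cosimplicial
presheaf `X`: it sends a non-invertible monomorphism `[k] ↪ [n]` to `X^k`. -/
def latchingDiagram (X : CosimplicialObject (Cᵒᵖ ⥤ Type w)) (n : SimplexCategory) :
    LatchIndex n ⥤ (Cᵒᵖ ⥤ Type w) :=
  ObjectProperty.ι _ ⋙ Over.forget n ⋙ X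

/-- The `n`-th latching object of a cosimplicial presheaf. -/
def latchingObject (X : CosimplicialObject (Cᵒᵖ ⥤ Type w)) (n : SimplexCategory) :
    Cᵒᵖ ⥤ Type w :=
  colimit (latchingDiagram X n)

/-- The `n`-th latching map `Lₙ X ⟶ Xⁿ`, induced by the structure maps. -/
def latchingMap (X : CosimplicialObject (Cᵒᵖ ⥤ Type w)) (n : SimplexCategory) :
    latchingObject X n ⟶ X.obj n :=
  colimit.desc (latchingDiagram X n)
    { pt := X.obj n
      ι :=
        { app := fun (f : LatchIndex n) => X.map f.obj.hom
          naturality := by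
            intro f g h
            show X.map _ ≫ X.map _ = X.map _ ≫ 𝟙 _
            exact ((Functor.map_comp X _ _).symm.trans
              (congrArg X.map (Over.w ((ObjectProperty.ι _).map h)))).trans
              (Category.comp_id _).symm } }

/-! ### Auxiliary material -/

namespace LatchAux

open SimplexCategory

/-! #### Value computations for faces and degeneracies -/

lemma myδ_val {n : ℕ} (i : Fin (n+2)) (k : Fin (n+1)) :
    (((SimplexCategory.δ i).toOrderHom k : Fin (n+2)) : ℕ) =
      if (k:ℕ) < (i:ℕ) then (k:ℕ) else (k:ℕ)+1 := by
  simp [SimplexCategory.δ, Fin.succAbove, Fin.lt_iff_val_lt_val]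
  split_ifs <;> simp

lemma myσ_val {n : ℕ} (i : Fin (n+1)) (k : Fin (n+2)) :
    (((SimplexCategory.σ i).toOrderHom k : Fin (n+1)) : ℕ) =
      if (k:ℕ) ≤ (i:ℕ) then (k:ℕ) else (k:ℕ)-1 := by
  simp [SimplexCategory.σ, Fin.predAbove, Fin.lt_iff_val_lt_val]
  split_ifs <;> simp <;> omega

/-! #### The simplicial identities we need, with explicit index bookkeeping -/

lemma idE1 {q : ℕ} (i j : Fin (q+3)) (hij : (i:ℕ) < (j:ℕ)) (jj ii : Fin (q+2))
    (h1 : (jj:ℕ) = (j:ℕ) - 1) (h2 : (ii:ℕ) = (i:ℕ)) :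
    SimplexCategory.δ jj ≫ SimplexCategory.δ i = SimplexCategory.δ ii ≫ SimplexCategory.δ j := by
  ext k : 3
  rw [Fin.ext_iff]
  have hk := k.is_lt; have hi := i.is_lt; have hj := j.is_lt
  simp only [SimplexCategory.comp_toOrderHom, OrderHom.comp_coe, Function.comp_apply,
    myδ_val, myσ_val]
  split_ifs <;> omega

lemma idA1 {q : ℕ} (i j : Fin (q+3)) (hij : (i:ℕ)+1 < (j:ℕ)) (jj ii : Fin (q+2)) (ii' : Fin (q+1))
    (h1 : (jj:ℕ) = (j:ℕ) - 1) (h2 : (ii:ℕ) = (i:ℕ)) (h3 : (ii':ℕ) = (i:ℕ)) :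
    SimplexCategory.δ j ≫ SimplexCategory.σ ii = SimplexCategory.σ ii' ≫ SimplexCategory.δ jj := by
  ext k : 3
  rw [Fin.ext_iff]
  have hk := k.is_lt; have hi := i.is_lt; have hj := j.is_lt
  simp only [SimplexCategory.comp_toOrderHom, OrderHom.comp_coe, Function.comp_apply,
    myδ_val, myσ_val]
  split_ifs <;> omega

lemma idA2 {q : ℕ} (i j : Fin (q+3)) (hij : (i:ℕ)+1 < (j:ℕ)) (jj ii : Fin (q+2)) (ii' : Fin (q+1))
    (h1 : (jj:ℕ) = (j:ℕ) - 1) (h2 : (ii:ℕ) = (i:ℕ)) (h3 : (ii':ℕ) = (i:ℕ)) :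
    SimplexCategory.σ jj ≫ SimplexCategory.σ ii' ≫ SimplexCategory.δ ii
      = SimplexCategory.σ ii ≫ SimplexCategory.δ i ≫ SimplexCategory.σ jj := by
  ext k : 3
  rw [Fin.ext_iff]
  have hk := k.is_lt; have hi := i.is_lt; have hj := j.is_lt
  simp only [SimplexCategory.comp_toOrderHom, OrderHom.comp_coe, Function.comp_apply,
    myδ_val, myσ_val]
  split_ifs <;> omega

lemma idB1 {q : ℕ} (i : Fin (q+3)) (ii : Fin (q+2)) (iq : Fin (q+1)) (i1 : Fin (q+2))
    (h2 : (ii:ℕ) = (i:ℕ)) (h3 : (iq:ℕ) = (i:ℕ)) (h4 : (i1:ℕ) = (i:ℕ)+1) :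
    SimplexCategory.σ ii ≫ SimplexCategory.σ iq ≫ SimplexCategory.δ ii
      = SimplexCategory.σ ii ≫ SimplexCategory.δ i ≫ SimplexCategory.σ i1 := by
  ext k : 3
  rw [Fin.ext_iff]
  have hk := k.is_lt; have hi := i.is_lt
  simp only [SimplexCategory.comp_toOrderHom, OrderHom.comp_coe, Function.comp_apply,
    myδ_val, myσ_val]
  split_ifs <;> omega

lemma idB2 {q : ℕ} (i j : Fin (q+3)) (hj : (j:ℕ) = (i:ℕ)+1) (hi1 : 1 ≤ (i:ℕ))
    (ii jj im : Fin (q+2)) (imq : Fin (q+1))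
    (h1 : (jj:ℕ) = (j:ℕ)-1) (h2 : (ii:ℕ) = (i:ℕ)) (h3 : (im:ℕ) = (i:ℕ)-1)
    (h4 : (imq:ℕ) = (i:ℕ)-1) :
    SimplexCategory.σ im ≫ SimplexCategory.σ imq ≫ SimplexCategory.δ ii
      = SimplexCategory.σ jj ≫ SimplexCategory.δ j ≫ SimplexCategory.σ im := by
  ext k : 3
  rw [Fin.ext_iff]
  have hk := k.is_lt; have hii := i.is_lt; have hjj := j.is_lt
  simp only [SimplexCategory.comp_toOrderHom, OrderHom.comp_coe, Function.comp_apply,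
    myδ_val, myσ_val]
  split_ifs <;> omega

/-- every coface admits a retraction. -/
lemma delta_retraction {p : ℕ} (i : Fin (p+2)) :
    ∃ r : SimplexCategory.mk (p+1) ⟶ SimplexCategory.mk p,
      SimplexCategory.δ i ≫ r = 𝟙 (SimplexCategory.mk p) := by
  by_cases h : (i:ℕ) ≤ p
  · exact ⟨SimplexCategory.σ ⟨(i:ℕ), by omega⟩,
      SimplexCategory.δ_comp_σ_self' (Fin.ext (by simp))⟩
  · have := i.is_lt
    exact ⟨SimplexCategory.σ ⟨(i:ℕ)-1, by omega⟩,
      SimplexCategory.δ_comp_σ_succ' (Fin.ext (by simp; omega))⟩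

/-! #### Elementwise functoriality helpers -/

variable (X : CosimplicialObject (Cᵒᵖ ⥤ Type w))

lemma map_app_assoc {a b d : SimplexCategory} (u : a ⟶ b) (v : b ⟶ d) (c : Cᵒᵖ)
    (x : (X.obj a).obj c) :
    (X.map (u ≫ v)).app c x = (X.map v).app c ((X.map u).app c x) := by
  rw [X.map_comp]; rfl

lemma map_app_id {a : SimplexCategory} (c : Cᵒᵖ) (x : (X.obj a).obj c) :
    (X.map (𝟙 a)).app c x = x := by
  rw [X.map_id]; rfl

lemma map_congr {a b : SimplexCategory} {u v : a ⟶ b} (h : u = v) (c : Cᵒᵖ)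
    (x : (X.obj a).obj c) :
    (X.map u).app c x = (X.map v).app c x := by rw [h]

/-! #### Objects of the latching category -/

/-- A non-invertible monomorphism, as an object of the latching category. -/
def monoObj {k m : ℕ} (u : SimplexCategory.mk k ⟶ SimplexCategory.mk m) [hu : Mono u]
    (hkm : k < m) : LatchIndex (SimplexCategory.mk m) :=
  ⟨Over.mk u, by
    constructor
    · simpa using hu
    · intro hiso
      change IsIso u at hiso
      haveI := hiso
      have := SimplexCategory.len_le_of_epi u
      simp only [SimplexCategory.len_mk] at this
      omega⟩

/-- A coface map as an object of the latching category. -/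
def faceObj {m : ℕ} (i : Fin (m+2)) : LatchIndex (SimplexCategory.mk (m+1)) :=
  monoObj (SimplexCategory.δ i) (Nat.lt_succ_self m)

instance latchZeroEmpty : IsEmpty (LatchIndex (SimplexCategory.mk 0)) := by
  constructor
  intro f
  have h2 := @SimplexCategory.len_le_of_mono _ _ f.obj.hom f.property.1
  have h3 : f.obj.left.len = 0 := by simpa using h2
  refine f.property.2 (SimplexCategory.isIso_of_bijective ?_)
  rw [Fintype.bijective_iff_injective_and_card]
  exact ⟨SimplexCategory.mono_iff_injective.1 f.property.1, by simp [h3]⟩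

/-- The latching diagram evaluated at an object of `C`. -/
abbrev latchDiag (n : SimplexCategory) (c : Cᵒᵖ) : LatchIndex n ⥤ Type w :=
  latchingDiagram X n ⋙ (evaluation Cᵒᵖ (Type w)).obj c

lemma latch_step {n : SimplexCategory} (c : Cᵒᵖ) (A B : LatchIndex n)
    (g : A.obj.left ⟶ B.obj.left) (hw : g ≫ B.obj.hom = A.obj.hom)
    (x : (X.obj A.obj.left).obj c) :
    colimit.ι (latchDiag X n c) A x
      = colimit.ι (latchDiag X n c) B ((X.map g).app c x) :=
  (ConcreteCategory.congr_hom (colimit.w (latchDiag X n c) (show A ⟶ B from ObjectProperty.homMk (Over.homMk g hw))) x).symm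

/-- Case `p = 0` of the codimension-one lemma: contradiction with unaugmentability. -/
lemma core_zero
    (hX : Nonempty (IsInitial (equalizer
      (X.map (SimplexCategory.δ (0 : Fin 2)))
      (X.map (SimplexCategory.δ (1 : Fin 2))))))
    (c : Cᵒᵖ) (x : (X.obj (SimplexCategory.mk 0)).obj c)
    (hxy : (X.map (SimplexCategory.δ (0 : Fin 2))).app c x
      = (X.map (SimplexCategory.δ (1 : Fin 2))).app c x) : False := by
  obtain ⟨hI⟩ := hX
  set f0 := X.map (SimplexCategory.δ (0 : Fin 2))
  set f1 := X.map (SimplexCategory.δ (1 : Fin 2))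
  let F := (evaluation Cᵒᵖ (Type w)).obj c
  haveI : PreservesLimit (parallelPair f0 f1) F := inferInstance
  let q : PUnit.{w+1} ⟶ F.obj (X.obj (SimplexCategory.mk 0)) := TypeCat.ofHom (fun _ => x)
  have hq : q ≫ F.map f0 = q ≫ F.map f1 := by ext; exact hxy
  let el : equalizer (F.map f0) (F.map f1) := equalizer.lift q hq PUnit.unit
  have e : F.obj (equalizer f0 f1) := (PreservesEqualizer.iso F f0 f1).inv el
  exact ((hI.to ((CategoryTheory.Functor.const Cᵒᵖ).obj PEmpty.{w+1})).app c e).elim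

/-- Codimension one comparison, in the case `i < j`. -/
lemma coreLT
    (hX : Nonempty (IsInitial (equalizer
      (X.map (SimplexCategory.δ (0 : Fin 2)))
      (X.map (SimplexCategory.δ (1 : Fin 2))))))
    (p : ℕ) (c : Cᵒᵖ) (i j : Fin (p+2))
    (hij : (i:ℕ) < (j:ℕ))
    (x y : (X.obj (SimplexCategory.mk p)).obj c)
    (h : (X.map (SimplexCategory.δ i)).app c x = (X.map (SimplexCategory.δ j)).app c y) :
    colimit.ι (latchDiag X (SimplexCategory.mk (p+1)) c) (faceObj i) x
      = colimit.ι (latchDiag X (SimplexCategory.mk (p+1)) c) (faceObj j) y := by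
  cases p with
  | zero =>
    exfalso
    have hi0 : i = (0 : Fin 2) := Fin.ext (by simp only [Fin.val_zero]; omega)
    have hj1 : j = (1 : Fin 2) := Fin.ext (by simp only [Fin.val_one]; have := j.is_lt; omega)
    subst hi0; subst hj1
    have e0 : SimplexCategory.δ (0 : Fin 2) ≫ SimplexCategory.σ (0 : Fin 1)
        = 𝟙 (SimplexCategory.mk 0) := SimplexCategory.δ_comp_σ_self' (Fin.ext rfl)
    have e1 : SimplexCategory.δ (1 : Fin 2) ≫ SimplexCategory.σ (0 : Fin 1)
        = 𝟙 (SimplexCategory.mk 0) := SimplexCategory.δ_comp_σ_succ' (Fin.ext rfl)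
    have t0 := map_congr X e0 c x
    have t1 := map_congr X e1 c y
    simp only [map_app_assoc, map_app_id] at t0 t1
    have hxy : x = y := by rw [← t0, h, t1]
    exact core_zero X hX c x (by rw [h, hxy])
  | succ q =>
    have hjlt := j.is_lt
    obtain ⟨ii, hii⟩ : ∃ ii : Fin (q+2), (ii:ℕ) = (i:ℕ) := ⟨⟨(i:ℕ), by omega⟩, rfl⟩
    obtain ⟨jj, hjj⟩ : ∃ jj : Fin (q+2), (jj:ℕ) = (j:ℕ)-1 := ⟨⟨(j:ℕ)-1, by omega⟩, rfl⟩
    have E1 : SimplexCategory.δ jj ≫ SimplexCategory.δ i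
        = SimplexCategory.δ ii ≫ SimplexCategory.δ j := idE1 i j hij jj ii hjj hii
    have E2 : SimplexCategory.δ i ≫ SimplexCategory.σ ii = 𝟙 (SimplexCategory.mk (q+1)) :=
      SimplexCategory.δ_comp_σ_self' (Fin.ext (by simp only [Fin.coe_castSucc]; omega))
    have E3 : SimplexCategory.δ j ≫ SimplexCategory.σ jj = 𝟙 (SimplexCategory.mk (q+1)) :=
      SimplexCategory.δ_comp_σ_succ' (Fin.ext (by simp only [Fin.val_succ]; omega))
    have hx := map_congr X E2 c x
    have hy := map_congr X E3 c y
    simp only [map_app_assoc, map_app_id] at hx hy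
    -- hx : X(σ ii)(X(δ i)x) = x,  hy : X(σ jj)(X(δ j)y) = y
    have hw : (X.map (SimplexCategory.σ jj)).app c ((X.map (SimplexCategory.δ i)).app c x)
        = y := by rw [h]; exact hy
    have key : ∃ x' : (X.obj (SimplexCategory.mk q)).obj c,
        (X.map (SimplexCategory.δ jj)).app c x' = x ∧
        (X.map (SimplexCategory.δ ii)).app c x' = y := by
      by_cases hB : (j:ℕ) = (i:ℕ)+1
      · -- adjacent faces
        have hiijj : ii = jj := Fin.ext (by omega)
        have hxy : x = y := by rw [← hx, ← hw, hiijj]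
        by_cases hq : (i:ℕ) ≤ q
        · -- use x' = σ_{i} x
          obtain ⟨iq, hiq⟩ : ∃ iq : Fin (q+1), (iq:ℕ) = (i:ℕ) := ⟨⟨(i:ℕ), by omega⟩, rfl⟩
          obtain ⟨i1, hi1⟩ : ∃ i1 : Fin (q+2), (i1:ℕ) = (i:ℕ)+1 := ⟨⟨(i:ℕ)+1, by omega⟩, rfl⟩
          have B1b : SimplexCategory.δ j ≫ SimplexCategory.σ i1
              = 𝟙 (SimplexCategory.mk (q+1)) :=
            SimplexCategory.δ_comp_σ_self' (Fin.ext (by simp only [Fin.coe_castSucc]; omega))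
          have T := map_congr X (idB1 i ii iq i1 hii hiq hi1) c
            ((X.map (SimplexCategory.δ i)).app c x)
          simp only [map_app_assoc] at T
          rw [hx] at T
          -- T : X(δ ii)(X(σ iq)x) = X(σ i1)(X(δ i)x)
          have T2 := map_congr X B1b c y
          simp only [map_app_assoc, map_app_id] at T2
          rw [h, T2] at T
          -- T : X(δ ii)(X(σ iq)x) = y
          exact ⟨(X.map (SimplexCategory.σ iq)).app c x, by rw [← hiijj, T, hxy], T⟩
        · -- here `i = q+1`; use x' = σ_{i-1} σ_{i-1} z
          have hi1 : 1 ≤ (i:ℕ) := by omega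
          obtain ⟨im, him⟩ : ∃ im : Fin (q+2), (im:ℕ) = (i:ℕ)-1 := ⟨⟨(i:ℕ)-1, by omega⟩, rfl⟩
          obtain ⟨imq, himq⟩ : ∃ imq : Fin (q+1), (imq:ℕ) = (i:ℕ)-1 :=
            ⟨⟨(i:ℕ)-1, by omega⟩, rfl⟩
          have B2b : SimplexCategory.δ i ≫ SimplexCategory.σ im
              = 𝟙 (SimplexCategory.mk (q+1)) :=
            SimplexCategory.δ_comp_σ_succ' (Fin.ext (by simp only [Fin.val_succ]; omega))
          have T := map_congr X (idB2 i j hB hi1 ii jj im imq hjj hii him himq) c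
            ((X.map (SimplexCategory.δ i)).app c x)
          simp only [map_app_assoc] at T
          -- T : X(δ ii)(X(σ imq)(X(σ im)(X(δ i)x))) = X(σ im)(X(δ j)(X(σ jj)(X(δ i)x)))
          rw [hw, ← h] at T
          -- T : ... = X(σ im)(X(δ i)x)
          have T2 := map_congr X B2b c x
          simp only [map_app_assoc, map_app_id] at T2
          rw [T2] at T
          -- T : X(δ ii)(x') = x
          exact ⟨(X.map (SimplexCategory.σ imq)).app c x,
            by rw [← hiijj]; exact T, T.trans hxy⟩
      · -- non-adjacent faces: use x' = σ_{i} y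
        have hA : (i:ℕ)+1 < (j:ℕ) := by omega
        obtain ⟨ii', hii'⟩ : ∃ ii' : Fin (q+1), (ii':ℕ) = (i:ℕ) := ⟨⟨(i:ℕ), by omega⟩, rfl⟩
        refine ⟨(X.map (SimplexCategory.σ ii')).app c y, ?_, ?_⟩
        · have T := map_congr X (idA1 i j hA jj ii ii' hjj hii hii') c y
          simp only [map_app_assoc] at T
          rw [← h, hx] at T
          -- T : x = X(δ jj)(X(σ ii')y)
          exact T.symm
        · have T := map_congr X (idA2 i j hA jj ii ii' hjj hii hii') c
            ((X.map (SimplexCategory.δ i)).app c x)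
          simp only [map_app_assoc] at T
          rw [hx, hw] at T
          exact T
    obtain ⟨x', c1, c2⟩ := key
    haveI : Mono (SimplexCategory.δ jj ≫ SimplexCategory.δ i) := mono_comp _ _
    have s1 := latch_step X c (monoObj (SimplexCategory.δ jj ≫ SimplexCategory.δ i)
      (by omega)) (faceObj i) (SimplexCategory.δ jj) rfl x'
    have s2 := latch_step X c (monoObj (SimplexCategory.δ jj ≫ SimplexCategory.δ i)
      (by omega)) (faceObj j) (SimplexCategory.δ ii) E1.symm x'
    erw [c1] at s1
    erw [c2] at s2
    rw [← s1, s2]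

/-- The codimension-one comparison lemma, general version. -/
lemma core
    (hX : Nonempty (IsInitial (equalizer
      (X.map (SimplexCategory.δ (0 : Fin 2)))
      (X.map (SimplexCategory.δ (1 : Fin 2))))))
    (p : ℕ) (c : Cᵒᵖ) (i j : Fin (p+2))
    (x y : (X.obj (SimplexCategory.mk p)).obj c)
    (h : (X.map (SimplexCategory.δ i)).app c x = (X.map (SimplexCategory.δ j)).app c y) :
    colimit.ι (latchDiag X (SimplexCategory.mk (p+1)) c) (faceObj i) x
      = colimit.ι (latchDiag X (SimplexCategory.mk (p+1)) c) (faceObj j) y := by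
  rcases Nat.lt_trichotomy (i:ℕ) (j:ℕ) with hlt | heq | hgt
  · exact coreLT X hX p c i j hlt x y h
  · have : i = j := Fin.ext heq
    subst this
    obtain ⟨r, hr⟩ := delta_retraction i
    have hrx := map_congr X hr c x
    have hry := map_congr X hr c y
    simp only [map_app_assoc, map_app_id] at hrx hry
    have hxy : x = y := by rw [← hrx, h, hry]
    rw [hxy]
  · exact (coreLT X hX p c j i hgt y x h.symm).symm

/-- Reduction of an arbitrary object of the latching category to a codimension one face. -/
lemma reduce {p : ℕ} (c : Cᵒᵖ) (f : LatchIndex (SimplexCategory.mk (p+1)))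
    (xx : (X.obj f.obj.left).obj c) :
    ∃ (i : Fin (p+2)) (x' : (X.obj (SimplexCategory.mk p)).obj c),
      colimit.ι (latchDiag X (SimplexCategory.mk (p+1)) c) f xx
        = colimit.ι (latchDiag X (SimplexCategory.mk (p+1)) c) (faceObj i) x'
      ∧ (X.map (SimplexCategory.δ i)).app c x' = (X.map f.obj.hom).app c xx := by
  have hns : ¬ Function.Surjective f.obj.hom.toOrderHom := fun hs =>
    f.property.2 (SimplexCategory.isIso_of_bijective
      ⟨SimplexCategory.mono_iff_injective.1 f.property.1, hs⟩)
  obtain ⟨i, f', hf'⟩ := SimplexCategory.eq_comp_δ_of_not_surjective f.obj.hom hns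
  refine ⟨i, (X.map f').app c xx, ?_, ?_⟩
  · exact latch_step X c f (faceObj i) f' hf'.symm xx
  · rw [← map_app_assoc, ← hf']

/-- Pointwise injectivity of the latching map. -/
lemma latch_inj
    (hX : Nonempty (IsInitial (equalizer
      (X.map (SimplexCategory.δ (0 : Fin 2)))
      (X.map (SimplexCategory.δ (1 : Fin 2))))))
    (m : ℕ) (c : Cᵒᵖ) :
    Function.Injective ((latchingMap X (SimplexCategory.mk m)).app c) := by
  intro a b hab
  set D := latchingDiagram X (SimplexCategory.mk m) with hD
  set I := colimitObjIsoColimitCompEvaluation D c with hI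
  obtain ⟨f, xx, hf⟩ := Types.jointly_surjective' (I.hom a)
  obtain ⟨g, yy, hg⟩ := Types.jointly_surjective' (I.hom b)
  have desc_eq : ∀ (A : LatchIndex (SimplexCategory.mk m)) (t : (latchDiag X _ c).obj A)
      (u : (latchingObject X (SimplexCategory.mk m)).obj c), colimit.ι (latchDiag X _ c) A t = I.hom u →
      (latchingMap X (SimplexCategory.mk m)).app c u = (X.map A.obj.hom).app c t := by
    intro A t u hu
    have e1 : colimit.ι D A ≫ latchingMap X (SimplexCategory.mk m) = X.map A.obj.hom :=
      colimit.ι_desc _ _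
    have e2 : (latchingMap X (SimplexCategory.mk m)).app c ((colimit.ι D A).app c t)
        = (X.map A.obj.hom).app c t :=
      ConcreteCategory.congr_hom (congrArg (fun (s : _ ⟶ X.obj (SimplexCategory.mk m)) => s.app c) e1) t
    have e3 : I.inv (colimit.ι (latchDiag X (SimplexCategory.mk m) c) A t)
        = (colimit.ι D A).app c t :=
      ConcreteCategory.congr_hom (colimitObjIsoColimitCompEvaluation_ι_inv D A c) t
    have e4 : I.inv (I.hom u) = u := ConcreteCategory.congr_hom I.hom_inv_id u
    rw [hu, e4] at e3
    rw [← e2]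
    exact congrArg ((latchingMap X (SimplexCategory.mk m)).app c) e3
  have key : (X.map f.obj.hom).app c xx = (X.map g.obj.hom).app c yy := by
    rw [← desc_eq f xx a hf, ← desc_eq g yy b hg, hab]
  suffices hs : colimit.ι (latchDiag X (SimplexCategory.mk m) c) f xx
      = colimit.ι (latchDiag X (SimplexCategory.mk m) c) g yy by
    have ea : I.inv (I.hom a) = a := ConcreteCategory.congr_hom I.hom_inv_id a
    have eb : I.inv (I.hom b) = b := ConcreteCategory.congr_hom I.hom_inv_id b
    rw [← ea, ← eb, ← hf, ← hg]
    exact congrArg I.inv hs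
  cases m with
  | zero => exact (latchZeroEmpty.false f).elim
  | succ p =>
    obtain ⟨i, x', hstep, hx'⟩ := reduce X c f xx
    obtain ⟨j, y', gstep, hy'⟩ := reduce X c g yy
    rw [hstep, gstep]
    exact core X hX p c i j x' y' (by rw [hx', hy', key])

end LatchAux

/-- If a cosimplicial object `X` in a category of set-valued presheaves is
unaugmentable — the equalizer of the coface maps `X^{δ⁰}, X^{δ¹} : X⁰ ⇉ X¹` is
the initial (empty) presheaf — then every latching map of `X` is a
monomorphism. -/
theorem latching_maps_mono_of_unaugmentable
    (X : CosimplicialObject (Cᵒᵖ ⥤ Type w))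
    (hX : Nonempty (IsInitial (equalizer
      (X.map (SimplexCategory.δ (0 : Fin 2)))
      (X.map (SimplexCategory.δ (1 : Fin 2)))))) :
    ∀ n : SimplexCategory, Mono (latchingMap X n) := by
  intro n
  rw [← SimplexCategory.mk_len n]
  generalize n.len = m
  haveI : ∀ c : Cᵒᵖ, Mono ((latchingMap X (SimplexCategory.mk m)).app c) := fun c =>
    (CategoryTheory.mono_iff_injective _).2 (LatchAux.latch_inj X hX m c)
  exact NatTrans.mono_of_mono_app _

end
end

section
/- Simplicial subcomputad inclusions are stable under pushout: given a pushout square of simplicial categories in which one leg is a simplicial subcomputad inclusion A ↪ B and the other is a simplicial computad functor A → C with C a simplicial computad, the pushout P is a simplicial computad and the induced map C → P is a simplicial subcomputad inclusion. -/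
open CategoryTheory

/-- A simplicial category, presented as a simplicially enriched category:
a fixed set of objects `O`, for each `x : SimplexCategory` a set of `x`-arrows
between each pair of objects (together these form the hom simplicial sets),
levelwise composition and identities, and a contravariant action of simplicial
operators compatible with composition. -/
structure SCat where
  O : Type
  Arr : SimplexCategory → O → O → Type
  aid : ∀ (x : SimplexCategory) (a : O), Arr x a a
  comp : ∀ {x : SimplexCategory} {a b c : O}, Arr x a b → Arr x b c → Arr x a c
  act : ∀ {x y : SimplexCategory}, (y ⟶ x) → ∀ {a b : O}, Arr x a b → Arr y a b
  comp_assoc : ∀ {x : SimplexCategory} {a b c d : O}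
    (f : Arr x a b) (g : Arr x b c) (h : Arr x c d),
    comp (comp f g) h = comp f (comp g h)
  id_comp : ∀ {x : SimplexCategory} {a b : O} (f : Arr x a b), comp (aid x a) f = f
  comp_id : ∀ {x : SimplexCategory} {a b : O} (f : Arr x a b), comp f (aid x b) = f
  act_id : ∀ {x : SimplexCategory} {a b : O} (f : Arr x a b), act (𝟙 x) f = f
  act_act : ∀ {x y z : SimplexCategory} (α : y ⟶ x) (β : z ⟶ y) {a b : O}
    (f : Arr x a b), act β (act α f) = act (β ≫ α) f
  act_comp : ∀ {x y : SimplexCategory} (α : y ⟶ x) {a b c : O}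
    (f : Arr x a b) (g : Arr x b c), act α (comp f g) = comp (act α f) (act α g)
  act_aid : ∀ {x y : SimplexCategory} (α : y ⟶ x) (a : O), act α (aid x a) = aid y a

namespace SCat

variable (C : SCat)

/-- An arrow of a simplicial category is an identity. -/
def IsIdA {x : SimplexCategory} {a b : C.O} (f : C.Arr x a b) : Prop :=
  ∃ h : a = b, HEq f (C.aid x a)

/-- An arrow is atomic if it is not an identity and admits no factorization
into two non-identity arrows. -/
def AtomicA {x : SimplexCategory} {a b : C.O} (f : C.Arr x a b) : Prop :=
  ¬ C.IsIdA f ∧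
    ∀ (c : C.O) (g : C.Arr x a c) (h : C.Arr x c b),
      C.comp g h = f → C.IsIdA g ∨ C.IsIdA h

/-- Composable strings of atomic arrows at level `x`. -/
inductive APath (x : SimplexCategory) : C.O → C.O → Type
  | nil (a : C.O) : APath x a a
  | cons {a b c : C.O} (f : C.Arr x a b) (hf : C.AtomicA f) (p : APath x b c) :
      APath x a c

/-- The composite of a string of atomic arrows. -/
def APath.compP {C : SCat} {x : SimplexCategory} :
    ∀ {a b : C.O}, C.APath x a b → C.Arr x a b
  | _, _, .nil a => C.aid x a
  | _, _, .cons f _ p => C.comp f p.compP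

/-- The category of `x`-arrows is freely generated by the graph of its atomic
arrows: every arrow is uniquely a composite of a string of atomic arrows. -/
def FreeLevel (x : SimplexCategory) : Prop :=
  ∀ {a b : C.O} (f : C.Arr x a b),
    ∃ p : C.APath x a b, p.compP = f ∧ ∀ q : C.APath x a b, q.compP = f → q = p

/-- A simplicial computad: each level is freely generated by its atomic arrows,
and degeneracy operators (epimorphisms of `SimplexCategory`) carry atomic
arrows to atomic arrows. -/
def IsComputad : Prop :=
  (∀ x : SimplexCategory, C.FreeLevel x) ∧
    ∀ {x y : SimplexCategory} (α : y ⟶ x), Epi α →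
      ∀ {a b : C.O} (f : C.Arr x a b), C.AtomicA f → C.AtomicA (C.act α f)

end SCat

/-- A simplicial functor between simplicial categories. -/
structure SFunctor (C D : SCat) where
  obj : C.O → D.O
  map : ∀ (x : SimplexCategory) (a b : C.O), C.Arr x a b → D.Arr x (obj a) (obj b)
  map_aid : ∀ (x : SimplexCategory) (a : C.O),
    map x a a (C.aid x a) = D.aid x (obj a)
  map_comp : ∀ (x : SimplexCategory) (a b c : C.O)
    (f : C.Arr x a b) (g : C.Arr x b c),
    map x a c (C.comp f g) = D.comp (map x a b f) (map x b c g)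
  map_act : ∀ {x y : SimplexCategory} (α : y ⟶ x) (a b : C.O) (f : C.Arr x a b),
    map y a b (C.act α f) = D.act α (map x a b f)

namespace SFunctor

/-- The identity simplicial functor. -/
def idF (C : SCat) : SFunctor C C where
  obj a := a
  map _ _ _ f := f
  map_aid := by intros; rfl
  map_comp := by intros; rfl
  map_act := by intros; rfl

/-- Composition of simplicial functors (diagrammatic order). -/
def comp {A B C : SCat} (F : SFunctor A B) (G : SFunctor B C) : SFunctor A C where
  obj a := G.obj (F.obj a)
  map x a b f := G.map x _ _ (F.map x a b f)
  map_aid := by intro x a; (try dsimp only); rw [F.map_aid, G.map_aid]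
  map_comp := by intro x a b c f g; (try dsimp only); rw [F.map_comp, G.map_comp]
  map_act := by intro x y α a b f; (try dsimp only); rw [F.map_act, G.map_act]

/-- A functor of simplicial computads: atomic arrows are sent to atomic arrows
or identities. -/
def IsComputadFunctor {C D : SCat} (F : SFunctor C D) : Prop :=
  ∀ {x : SimplexCategory} {a b : C.O} (f : C.Arr x a b),
    C.AtomicA f → D.AtomicA (F.map x a b f) ∨ D.IsIdA (F.map x a b f)

/-- A simplicial subcomputad inclusion: a functor of simplicial computads that
is injective on objects and faithful. -/
def IsSubcomputadInclusion {C D : SCat} (F : SFunctor C D) : Prop :=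
  F.IsComputadFunctor ∧ Function.Injective F.obj ∧
    ∀ (x : SimplexCategory) (a b : C.O), Function.Injective (F.map x a b)

end SFunctor


namespace SCP

theorem SFunctor.ext' {X Y : SCat} {T U : SFunctor X Y}
    (h : ∀ a, T.obj a = U.obj a)
    (h2 : ∀ (x : SimplexCategory) (a b : X.O) (f : X.Arr x a b),
      HEq (T.map x a b f) (U.map x a b f)) : T = U := by
  obtain ⟨To, Tm, _, _, _⟩ := T
  obtain ⟨Uo, Um, _, _, _⟩ := U
  have ho : To = Uo := funext h
  subst ho
  have hm : Tm = Um := by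
    funext x a b f; exact eq_of_heq (h2 x a b f)
  subst hm
  rfl

theorem comp_heq (D : SCat) {x : SimplexCategory} {a b c a' b' c' : D.O}
    (ha : a = a') (hb : b = b') (hc : c = c')
    {f : D.Arr x a b} {f' : D.Arr x a' b'} {g : D.Arr x b c} {g' : D.Arr x b' c'}
    (hf : HEq f f') (hg : HEq g g') : HEq (D.comp f g) (D.comp f' g') := by
  subst ha; subst hb; subst hc; rw [eq_of_heq hf, eq_of_heq hg]

theorem act_heq (D : SCat) {x y : SimplexCategory} (α : y ⟶ x) {a b a' b' : D.O}
    (ha : a = a') (hb : b = b')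
    {f : D.Arr x a b} {f' : D.Arr x a' b'} (hf : HEq f f') :
    HEq (D.act α f) (D.act α f') := by
  subst ha; subst hb; rw [eq_of_heq hf]

theorem map_heq {X Y : SCat} (T : SFunctor X Y) {x : SimplexCategory} {a b a' b' : X.O}
    (ha : a = a') (hb : b = b') {f : X.Arr x a b} {f' : X.Arr x a' b'}
    (hf : HEq f f') : HEq (T.map x a b f) (T.map x a' b' f') := by
  subst ha; subst hb; rw [eq_of_heq hf]

theorem isid_heq (D : SCat) {x : SimplexCategory} {a b a' b' : D.O} (ha : a = a') (hb : b = b')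
    {f : D.Arr x a b} {f' : D.Arr x a' b'} (hf : HEq f f') :
    D.IsIdA f → D.IsIdA f' := by subst ha; subst hb; rw [eq_of_heq hf]; exact id

theorem atomic_heq (D : SCat) {x : SimplexCategory} {a b a' b' : D.O} (ha : a = a') (hb : b = b')
    {f : D.Arr x a b} {f' : D.Arr x a' b'} (hf : HEq f f') :
    D.AtomicA f → D.AtomicA f' := by subst ha; subst hb; rw [eq_of_heq hf]; exact id

theorem isid_aid (D : SCat) (x : SimplexCategory) (a : D.O) : D.IsIdA (D.aid x a) :=
  ⟨rfl, HEq.rfl⟩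

theorem isid_map {X Y : SCat} (T : SFunctor X Y) {x : SimplexCategory} {a b : X.O}
    {f : X.Arr x a b} (h : X.IsIdA f) : Y.IsIdA (T.map x a b f) := by
  obtain ⟨rfl, hf⟩ := h
  rw [eq_of_heq hf, T.map_aid]; exact isid_aid ..

/-! ### APath infrastructure -/

def APath.append {D : SCat} {x : SimplexCategory} :
    ∀ {a b c : D.O}, D.APath x a b → D.APath x b c → D.APath x a c
  | _, _, _, .nil _, q => q
  | _, _, _, .cons f hf p, q => .cons f hf (APath.append p q)

theorem APath.compP_append {D : SCat} {x : SimplexCategory} {a b c : D.O}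
    (p : D.APath x a b) (q : D.APath x b c) :
    (APath.append p q).compP = D.comp p.compP q.compP := by
  induction p with
  | nil a => simp only [APath.append, SCat.APath.compP, D.id_comp]
  | cons f hf p ih => simp only [APath.append, SCat.APath.compP, ih, D.comp_assoc]

def APath.castP {D : SCat} {x : SimplexCategory} {a b a' b' : D.O}
    (ha : a = a') (hb : b = b') (p : D.APath x a b) : D.APath x a' b' :=
  hb ▸ ha ▸ p

theorem APath.castP_heq {D : SCat} {x : SimplexCategory} {a b a' b' : D.O}
    (ha : a = a') (hb : b = b') (p : D.APath x a b) :
    HEq (APath.castP ha hb p) p := by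
  subst ha; subst hb; rfl

theorem APath.compP_castP_heq {D : SCat} {x : SimplexCategory} {a b a' b' : D.O}
    (ha : a = a') (hb : b = b') (p : D.APath x a b) :
    HEq (APath.castP ha hb p).compP p.compP := by
  subst ha; subst hb; rfl

/-! ### decomposition in a free level -/

noncomputable def decA {D : SCat} {x : SimplexCategory} (h : D.FreeLevel x) {a b : D.O}
    (f : D.Arr x a b) : D.APath x a b := (h f).choose

theorem decA_spec {D : SCat} {x : SimplexCategory} (h : D.FreeLevel x) {a b : D.O}
    (f : D.Arr x a b) : (decA h f).compP = f := (h f).choose_spec.1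

theorem decA_uniq {D : SCat} {x : SimplexCategory} (h : D.FreeLevel x) {a b : D.O}
    {f : D.Arr x a b} (q : D.APath x a b) (hq : q.compP = f) : q = decA h f :=
  (h f).choose_spec.2 q hq

theorem decA_comp {D : SCat} {x : SimplexCategory} (h : D.FreeLevel x) {a b c : D.O}
    (f : D.Arr x a b) (g : D.Arr x b c) :
    decA h (D.comp f g) = APath.append (decA h f) (decA h g) :=
  (decA_uniq h _ (by rw [APath.compP_append, decA_spec, decA_spec])).symm

theorem decA_aid {D : SCat} {x : SimplexCategory} (h : D.FreeLevel x) (a : D.O) :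
    decA h (D.aid x a) = .nil a :=
  (decA_uniq h (.nil a) rfl).symm

theorem decA_atomic {D : SCat} {x : SimplexCategory} (h : D.FreeLevel x) {a b : D.O}
    {f : D.Arr x a b} (hf : D.AtomicA f) :
    decA h f = .cons f hf (.nil b) :=
  (decA_uniq h (.cons f hf (.nil b)) (by show D.comp f (SCat.APath.compP (.nil b)) = f; exact D.comp_id f)).symm

end SCP

namespace SCP

def mapAPath {X Y : SCat} (T : SFunctor X Y)
    (hT : ∀ {x : SimplexCategory} {a b : X.O} (f : X.Arr x a b),
      X.AtomicA f → Y.AtomicA (T.map x a b f)) :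
    ∀ {x : SimplexCategory} {a b : X.O}, X.APath x a b → Y.APath x (T.obj a) (T.obj b)
  | _, _, _, .nil a => .nil (T.obj a)
  | _, _, _, .cons f hf p => .cons (T.map _ _ _ f) (hT f hf) (mapAPath T hT p)

theorem compP_mapAPath {X Y : SCat} (T : SFunctor X Y) (hT) {x : SimplexCategory}
    {a b : X.O} (p : X.APath x a b) :
    (mapAPath T hT p).compP = T.map x a b p.compP := by
  induction p with
  | nil a => simp only [mapAPath, SCat.APath.compP, T.map_aid]
  | cons f hf p ih => simp only [mapAPath, SCat.APath.compP, ih, T.map_comp]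

theorem mapAPath_inj {X Y : SCat} (T : SFunctor X Y) (hT)
    (hobj : Function.Injective T.obj)
    (hmap : ∀ (x : SimplexCategory) (a b : X.O), Function.Injective (T.map x a b))
    {x : SimplexCategory} {a b : X.O} :
    ∀ {p q : X.APath x a b}, mapAPath T hT p = mapAPath T hT q → p = q := by
  intro p
  induction p with
  | nil a =>
    intro q hq
    cases q with
    | nil => rfl
    | cons f hf t => exact absurd hq (by simp [mapAPath])
  | cons f hf t ih =>
    intro q hq
    cases q with
    | nil => exact absurd hq (by simp [mapAPath])
    | cons f' hf' t' =>
      simp only [mapAPath] at hq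
      injection hq with h1 h2 h3 h4 h5
      have hm := hobj h2
      subst hm
      have hff : f = f' := hmap _ _ _ (eq_of_heq h4)
      subst hff
      have := ih (eq_of_heq h5)
      subst this
      rfl

end SCP

namespace SCP

section Inv
variable {X Y : SCat} (e : SFunctor X Y) (e' : SFunctor Y X)

theorem inv_obj (h1 : e.comp e' = SFunctor.idF X) (a : X.O) : e'.obj (e.obj a) = a :=
  congrArg (fun T : SFunctor X X => T.obj a) h1

theorem inv_map (h1 : e.comp e' = SFunctor.idF X) {x : SimplexCategory} {a b : X.O}
    (f : X.Arr x a b) :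
    HEq (e'.map x (e.obj a) (e.obj b) (e.map x a b f)) f := by
  have key : ∀ (T : SFunctor X X), T = SFunctor.idF X → HEq (T.map x a b f) f := by
    rintro T rfl; exact HEq.rfl
  exact key (e.comp e') h1

theorem inv_obj_inj (h1 : e.comp e' = SFunctor.idF X) : Function.Injective e.obj := by
  intro a b h
  rw [← inv_obj e e' h1 a, ← inv_obj e e' h1 b, h]

theorem inv_map_inj (h1 : e.comp e' = SFunctor.idF X) (x : SimplexCategory) (a b : X.O) :
    Function.Injective (e.map x a b) := by
  intro f g h
  have hf := inv_map e e' h1 f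
  have hg := inv_map e e' h1 g
  rw [h] at hf
  exact eq_of_heq (hf.symm.trans hg)

theorem inv_isid_reflect (h1 : e.comp e' = SFunctor.idF X) {x : SimplexCategory} {a b : X.O}
    {f : X.Arr x a b} (h : Y.IsIdA (e.map x a b f)) : X.IsIdA f := by
  obtain ⟨hab, hf⟩ := h
  have hab' : a = b := inv_obj_inj e e' h1 hab
  subst hab'
  have hfa : e.map x a a f = Y.aid x (e.obj a) := eq_of_heq hf
  rw [← e.map_aid] at hfa
  exact ⟨rfl, heq_of_eq (inv_map_inj e e' h1 x a a hfa)⟩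

theorem inv_atomic_map (h1 : e.comp e' = SFunctor.idF X) (h2 : e'.comp e = SFunctor.idF Y)
    {x : SimplexCategory} {a b : X.O} {f : X.Arr x a b}
    (hf : X.AtomicA f) : Y.AtomicA (e.map x a b f) := by
  constructor
  · intro h; exact hf.1 (inv_isid_reflect e e' h1 h)
  · intro c g h hgh
    have hoa : e'.obj (e.obj a) = a := inv_obj e e' h1 a
    have hob : e'.obj (e.obj b) = b := inv_obj e e' h1 b
    have hf2 : X.AtomicA (e'.map x (e.obj a) (e.obj b) (e.map x a b f)) :=
      atomic_heq X hoa.symm hob.symm (inv_map e e' h1 f).symm hf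
    have hcomp : X.comp (e'.map x (e.obj a) c g) (e'.map x c (e.obj b) h)
        = e'.map x (e.obj a) (e.obj b) (e.map x a b f) := by
      rw [← e'.map_comp, hgh]
    rcases hf2.2 (e'.obj c) _ _ hcomp with hid | hid
    · left
      have h2' : Y.IsIdA (e.map x _ _ (e'.map x (e.obj a) c g)) := isid_map e hid
      exact isid_heq Y (inv_obj e' e h2 (e.obj a)) (inv_obj e' e h2 c)
        (inv_map e' e h2 g) h2'
    · right
      have h2' : Y.IsIdA (e.map x _ _ (e'.map x c (e.obj b) h)) := isid_map e hid
      exact isid_heq Y (inv_obj e' e h2 c) (inv_obj e' e h2 (e.obj b))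
        (inv_map e' e h2 h) h2'

theorem inv_computad (h1 : e.comp e' = SFunctor.idF X) (h2 : e'.comp e = SFunctor.idF Y)
    (hX : X.IsComputad) : Y.IsComputad := by
  have hTe : ∀ {x : SimplexCategory} {a b : X.O} (f : X.Arr x a b),
      X.AtomicA f → Y.AtomicA (e.map x a b f) := fun f hf => inv_atomic_map e e' h1 h2 hf
  have hTe' : ∀ {x : SimplexCategory} {a b : Y.O} (f : Y.Arr x a b),
      Y.AtomicA f → X.AtomicA (e'.map x a b f) := fun f hf => inv_atomic_map e' e h2 h1 hf
  constructor
  · intro x p q g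
    have hp : e.obj (e'.obj p) = p := inv_obj e' e h2 p
    have hq : e.obj (e'.obj q) = q := inv_obj e' e h2 q
    set g₀ : X.Arr x (e'.obj p) (e'.obj q) := e'.map x p q g with hg₀
    refine ⟨APath.castP hp hq (mapAPath e hTe (decA (hX.1 x) g₀)), ?_, ?_⟩
    · refine eq_of_heq (HEq.trans (APath.compP_castP_heq hp hq _) ?_)
      rw [compP_mapAPath, decA_spec]
      exact HEq.trans (map_heq e rfl rfl HEq.rfl) (inv_map e' e h2 g)
    · intro r hr
      have hcast : (APath.castP hp hq (mapAPath e hTe (decA (hX.1 x) g₀))).compP = g := by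
        refine eq_of_heq (HEq.trans (APath.compP_castP_heq hp hq _) ?_)
        rw [compP_mapAPath, decA_spec]
        exact inv_map e' e h2 g
      apply mapAPath_inj e' hTe' (inv_obj_inj e' e h2) (inv_map_inj e' e h2)
      have hu1 : mapAPath e' hTe' r = decA (hX.1 x) g₀ := by
        apply decA_uniq
        rw [compP_mapAPath, hr]
      have hu2 : mapAPath e' hTe' (APath.castP hp hq (mapAPath e hTe (decA (hX.1 x) g₀)))
          = decA (hX.1 x) g₀ := by
        apply decA_uniq
        rw [compP_mapAPath, hcast]
      rw [hu1, hu2]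
  · intro x y α hα a b f hf
    have hf' : X.AtomicA (e'.map x a b f) := hTe' f hf
    have hact : X.AtomicA (X.act α (e'.map x a b f)) := hX.2 α hα _ hf'
    have hact2 : Y.AtomicA (e.map y _ _ (X.act α (e'.map x a b f))) := hTe _ hact
    rw [e.map_act] at hact2
    exact atomic_heq Y (inv_obj e' e h2 a) (inv_obj e' e h2 b)
      (act_heq Y α (inv_obj e' e h2 a) (inv_obj e' e h2 b) (inv_map e' e h2 f)) hact2

end Inv

end SCP

namespace SCP

structure Setup where
  A : SCat
  B : SCat
  C : SCat
  i : SFunctor A B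
  F : SFunctor A C
  hA : A.IsComputad
  hB : B.IsComputad
  hC : C.IsComputad
  hi : i.IsSubcomputadInclusion
  hF : F.IsComputadFunctor

namespace Setup

variable (S : Setup)

abbrev PO : Type := S.C.O ⊕ {b : S.B.O // ¬ ∃ a, S.i.obj a = b}

open Classical in
noncomputable def jobj (b : S.B.O) : S.PO :=
  if h : ∃ a, S.i.obj a = b then .inl (S.F.obj h.choose) else .inr ⟨b, h⟩

theorem jobj_i (a : S.A.O) : S.jobj (S.i.obj a) = .inl (S.F.obj a) := by
  have hex : ∃ a', S.i.obj a' = S.i.obj a := ⟨a, rfl⟩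
  rw [jobj, dif_pos hex]
  have : hex.choose = a := S.hi.2.1 hex.choose_spec
  rw [this]

theorem jobj_notin {b : S.B.O} (h : ¬ ∃ a, S.i.obj a = b) : S.jobj b = .inr ⟨b, h⟩ := by
  rw [jobj, dif_neg h]

def InImage {x : SimplexCategory} {b b' : S.B.O} (f : S.B.Arr x b b') : Prop :=
  ∃ p : Σ _a _a', S.A.Arr x _a _a', S.i.obj p.1 = b ∧ S.i.obj p.2.1 = b' ∧
    HEq (S.i.map x p.1 p.2.1 p.2.2) f

/-- `i` reflects identities. -/
theorem i_isid_reflect {x : SimplexCategory} {a b : S.A.O} {g : S.A.Arr x a b}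
    (h : S.B.IsIdA (S.i.map x a b g)) : S.A.IsIdA g := by
  obtain ⟨hab, hf⟩ := h
  have hab' : a = b := S.hi.2.1 hab
  subst hab'
  have : S.i.map x a a g = S.B.aid x (S.i.obj a) := eq_of_heq hf
  rw [← S.i.map_aid] at this
  exact ⟨rfl, heq_of_eq (S.hi.2.2 x a a this)⟩

theorem i_atomic {x : SimplexCategory} {a b : S.A.O} {g : S.A.Arr x a b}
    (hg : S.A.AtomicA g) : S.B.AtomicA (S.i.map x a b g) :=
  (S.hi.1 g hg).resolve_right (fun h => (hg.1 (S.i_isid_reflect h)).elim)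

theorem i_atomic_reflect {x : SimplexCategory} {a b : S.A.O} {g : S.A.Arr x a b}
    (hg : S.B.AtomicA (S.i.map x a b g)) : S.A.AtomicA g := by
  constructor
  · intro h; exact hg.1 (isid_map S.i h)
  · intro c u v huv
    rcases hg.2 (S.i.obj c) (S.i.map x a c u) (S.i.map x c b v)
        (by rw [← S.i.map_comp, huv]) with h | h
    · exact Or.inl (S.i_isid_reflect h)
    · exact Or.inr (S.i_isid_reflect h)

/-! ### Raw edges and chains -/

inductive RawEdge (S : Setup) (x : SimplexCategory) : Type
  | ce : (c c' : S.C.O) → (f : S.C.Arr x c c') → S.C.AtomicA f → RawEdge S x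
  | be : (b b' : S.B.O) → (f : S.B.Arr x b b') → S.B.AtomicA f → ¬ S.InImage f → RawEdge S x

noncomputable def RawEdge.src {S : Setup} {x : SimplexCategory} : RawEdge S x → S.PO
  | .ce c _ _ _ => .inl c
  | .be b _ _ _ _ => S.jobj b

noncomputable def RawEdge.tgt {S : Setup} {x : SimplexCategory} : RawEdge S x → S.PO
  | .ce _ c' _ _ => .inl c'
  | .be _ b' _ _ _ => S.jobj b'

def Chain {x : SimplexCategory} : S.PO → List (RawEdge S x) → S.PO → Prop
  | p, [], q => p = q
  | p, e :: l, q => e.src = p ∧ Chain e.tgt l q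

theorem chain_append {x : SimplexCategory} {p q r : S.PO} {l m : List (RawEdge S x)}
    (h1 : S.Chain p l q) (h2 : S.Chain q m r) : S.Chain p (l ++ m) r := by
  induction l generalizing p with
  | nil => exact (show p = q from h1) ▸ h2
  | cons e l ih => exact ⟨h1.1, ih h1.2⟩

/-! ### decomposition lists -/

def cListP {x : SimplexCategory} : ∀ {c c' : S.C.O}, S.C.APath x c c' → List (RawEdge S x)
  | _, _, .nil _ => []
  | _, _, .cons f hf p => .ce _ _ f hf :: cListP p

noncomputable def cList {x : SimplexCategory} {c c' : S.C.O} (f : S.C.Arr x c c') :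
    List (RawEdge S x) :=
  S.cListP (decA (S.hC.1 x) f)

open Classical in
noncomputable def convAtom {x : SimplexCategory} {b b' : S.B.O} (f : S.B.Arr x b b')
    (hf : S.B.AtomicA f) : List (RawEdge S x) :=
  if h : S.InImage f then S.cList (S.F.map x h.choose.1 h.choose.2.1 h.choose.2.2)
  else [.be b b' f hf h]

noncomputable def bListP {x : SimplexCategory} :
    ∀ {b b' : S.B.O}, S.B.APath x b b' → List (RawEdge S x)
  | _, _, .nil _ => []
  | _, _, .cons f hf p => S.convAtom f hf ++ bListP p

noncomputable def bList {x : SimplexCategory} {b b' : S.B.O} (f : S.B.Arr x b b') :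
    List (RawEdge S x) :=
  S.bListP (decA (S.hB.1 x) f)

/-! ### basic equations for cList/bList -/

theorem cListP_append {x : SimplexCategory} {c c' c'' : S.C.O} (p : S.C.APath x c c')
    (q : S.C.APath x c' c'') :
    S.cListP (APath.append p q) = S.cListP p ++ S.cListP q := by
  induction p with
  | nil => rfl
  | cons f hf p ih => simp only [APath.append, cListP, ih, List.cons_append]

theorem cList_comp {x : SimplexCategory} {c c' c'' : S.C.O} (f : S.C.Arr x c c')
    (g : S.C.Arr x c' c'') :
    S.cList (S.C.comp f g) = S.cList f ++ S.cList g := by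
  rw [cList, cList, cList, decA_comp (S.hC.1 x), cListP_append]

theorem cList_aid {x : SimplexCategory} (c : S.C.O) :
    S.cList (S.C.aid x c) = [] := by rw [cList, decA_aid (S.hC.1 x)]; rfl

theorem cList_atomic {x : SimplexCategory} {c c' : S.C.O} {f : S.C.Arr x c c'}
    (hf : S.C.AtomicA f) : S.cList f = [.ce c c' f hf] := by
  rw [cList, decA_atomic (S.hC.1 x) hf]; simp only [cListP]

theorem cList_isid {x : SimplexCategory} {c c' : S.C.O} {f : S.C.Arr x c c'}
    (hf : S.C.IsIdA f) : S.cList f = [] := by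
  obtain ⟨rfl, hf⟩ := hf
  rw [eq_of_heq hf, cList_aid]

theorem bListP_append {x : SimplexCategory} {b b' b'' : S.B.O} (p : S.B.APath x b b')
    (q : S.B.APath x b' b'') :
    S.bListP (APath.append p q) = S.bListP p ++ S.bListP q := by
  induction p with
  | nil => rfl
  | cons f hf p ih => simp only [APath.append, bListP, ih, List.append_assoc]

theorem bList_comp {x : SimplexCategory} {b b' b'' : S.B.O} (f : S.B.Arr x b b')
    (g : S.B.Arr x b' b'') :
    S.bList (S.B.comp f g) = S.bList f ++ S.bList g := by
  rw [bList, bList, bList, decA_comp (S.hB.1 x), bListP_append]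

theorem bList_aid {x : SimplexCategory} (b : S.B.O) :
    S.bList (S.B.aid x b) = [] := by rw [bList, decA_aid (S.hB.1 x)]; rfl

theorem bList_atomic {x : SimplexCategory} {b b' : S.B.O} {f : S.B.Arr x b b'}
    (hf : S.B.AtomicA f) : S.bList f = S.convAtom f hf := by
  rw [bList, decA_atomic (S.hB.1 x) hf]
  simp only [bListP, List.append_nil]

theorem convAtom_imap {x : SimplexCategory} {a a' : S.A.O} (g : S.A.Arr x a a')
    (hf : S.B.AtomicA (S.i.map x a a' g)) :
    S.convAtom (S.i.map x a a' g) hf = S.cList (S.F.map x a a' g) := by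
  have h : S.InImage (S.i.map x a a' g) := ⟨⟨a, a', g⟩, rfl, rfl, HEq.rfl⟩
  rw [convAtom, dif_pos h]
  obtain ⟨h1, h2, h3⟩ := h.choose_spec
  set w := h.choose with hw
  clear_value w
  obtain ⟨a₀, a₀', g₀⟩ := w
  have ha : a₀ = a := S.hi.2.1 h1
  subst ha
  have ha' : a₀' = a' := S.hi.2.1 h2
  subst ha'
  have hg : g₀ = g := S.hi.2.2 x _ _ (eq_of_heq h3)
  subst hg
  rfl

theorem decB_imap {x : SimplexCategory} {a a' : S.A.O} (g : S.A.Arr x a a') :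
    decA (S.hB.1 x) (S.i.map x a a' g)
      = mapAPath S.i (fun f hf => S.i_atomic hf) (decA (S.hA.1 x) g) :=
  (decA_uniq _ _ (by rw [compP_mapAPath, decA_spec])).symm

theorem bListP_mapAPath {x : SimplexCategory} {a a' : S.A.O} (p : S.A.APath x a a') :
    S.bListP (mapAPath S.i (fun f hf => S.i_atomic hf) p)
      = S.cList (S.F.map x a a' p.compP) := by
  induction p with
  | nil a =>
    simp only [mapAPath, bListP, SCat.APath.compP, S.F.map_aid, cList_aid]
  | cons g hg p ih =>
    simp only [mapAPath, bListP, SCat.APath.compP, ih, convAtom_imap,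
      ← cList_comp, ← S.F.map_comp]

theorem bList_imap {x : SimplexCategory} {a a' : S.A.O} (g : S.A.Arr x a a') :
    S.bList (S.i.map x a a' g) = S.cList (S.F.map x a a' g) := by
  rw [bList, decB_imap, bListP_mapAPath]
  have : (decA (S.hA.1 x) g).compP = g := decA_spec _ g
  rw [this]

end Setup
end SCP

namespace SCP
namespace Setup

variable (S : Setup)

/-! ### chains for cList/bList -/

theorem chain_cListP {x : SimplexCategory} {c c' : S.C.O} (p : S.C.APath x c c') :
    S.Chain (.inl c) (S.cListP p) (.inl c') := by
  induction p with
  | nil => exact rfl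
  | cons f hf p ih => exact ⟨rfl, ih⟩

theorem chain_cList {x : SimplexCategory} {c c' : S.C.O} (f : S.C.Arr x c c') :
    S.Chain (.inl c) (S.cList f) (.inl c') := S.chain_cListP _

theorem chain_convAtom {x : SimplexCategory} {b b' : S.B.O} (f : S.B.Arr x b b')
    (hf : S.B.AtomicA f) :
    S.Chain (S.jobj b) (S.convAtom f hf) (S.jobj b') := by
  by_cases h : S.InImage f
  · rw [convAtom, dif_pos h]
    obtain ⟨h1, h2, h3⟩ := h.choose_spec
    set w := h.choose with hw
    clear_value w
    obtain ⟨a, a', g⟩ := w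
    subst h1; subst h2
    rw [jobj_i, jobj_i]
    exact S.chain_cList _
  · rw [convAtom, dif_neg h]
    exact ⟨rfl, rfl⟩

theorem chain_bListP {x : SimplexCategory} {b b' : S.B.O} (p : S.B.APath x b b') :
    S.Chain (S.jobj b) (S.bListP p) (S.jobj b') := by
  induction p with
  | nil => exact rfl
  | cons f hf p ih => exact S.chain_append (S.chain_convAtom f hf) ih

theorem chain_bList {x : SimplexCategory} {b b' : S.B.O} (f : S.B.Arr x b b') :
    S.Chain (S.jobj b) (S.bList f) (S.jobj b') := S.chain_bListP _

/-! ### simplicial action on edge lists -/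

noncomputable def edgeAct {x y : SimplexCategory} (α : y ⟶ x) : RawEdge S x → List (RawEdge S y)
  | .ce _ _ f _ => S.cList (S.C.act α f)
  | .be _ _ f _ _ => S.bList (S.B.act α f)

noncomputable def actList {x y : SimplexCategory} (α : y ⟶ x) (l : List (RawEdge S x)) :
    List (RawEdge S y) :=
  l.flatMap (S.edgeAct α)

theorem actList_nil {x y : SimplexCategory} (α : y ⟶ x) : S.actList α [] = [] := rfl

theorem actList_cons {x y : SimplexCategory} (α : y ⟶ x) (e : RawEdge S x)
    (l : List (RawEdge S x)) :
    S.actList α (e :: l) = S.edgeAct α e ++ S.actList α l := by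
  simp [actList]

theorem actList_append {x y : SimplexCategory} (α : y ⟶ x) (l m : List (RawEdge S x)) :
    S.actList α (l ++ m) = S.actList α l ++ S.actList α m := by
  simp [actList]

theorem act_cListP {x y : SimplexCategory} (β : y ⟶ x) {c c' : S.C.O} (p : S.C.APath x c c') :
    S.actList β (S.cListP p) = S.cList (S.C.act β p.compP) := by
  induction p with
  | nil c => simp only [cListP, actList_nil, SCat.APath.compP, S.C.act_aid, cList_aid]
  | cons f hf p ih =>
    simp only [cListP, actList_cons, ih, edgeAct, SCat.APath.compP, S.C.act_comp, cList_comp]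

theorem act_cList {x y : SimplexCategory} (β : y ⟶ x) {c c' : S.C.O} (g : S.C.Arr x c c') :
    S.actList β (S.cList g) = S.cList (S.C.act β g) := by
  rw [cList, act_cListP, decA_spec (S.hC.1 x) g]

theorem act_convAtom {x y : SimplexCategory} (β : y ⟶ x) {b b' : S.B.O} (f : S.B.Arr x b b')
    (hf : S.B.AtomicA f) :
    S.actList β (S.convAtom f hf) = S.bList (S.B.act β f) := by
  by_cases h : S.InImage f
  · obtain ⟨⟨a, a', g⟩, h1, h2, h3⟩ := h
    subst h1; subst h2
    have hg : S.i.map x a a' g = f := eq_of_heq h3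
    subst hg
    rw [convAtom_imap, act_cList, ← S.F.map_act, ← bList_imap, ← S.i.map_act]
  · rw [convAtom, dif_neg h]
    show S.bList (S.B.act β f) ++ [] = _
    exact List.append_nil _

theorem act_bListP {x y : SimplexCategory} (β : y ⟶ x) {b b' : S.B.O} (p : S.B.APath x b b') :
    S.actList β (S.bListP p) = S.bList (S.B.act β p.compP) := by
  induction p with
  | nil b => simp only [bListP, actList_nil, SCat.APath.compP, S.B.act_aid, bList_aid]
  | cons f hf p ih =>
    simp only [bListP, actList_append, ih, act_convAtom, SCat.APath.compP, S.B.act_comp,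
      bList_comp]

theorem act_bList {x y : SimplexCategory} (β : y ⟶ x) {b b' : S.B.O} (g : S.B.Arr x b b') :
    S.actList β (S.bList g) = S.bList (S.B.act β g) := by
  rw [bList, act_bListP, decA_spec (S.hB.1 x) g]

theorem convAtom_notin {x : SimplexCategory} {b b' : S.B.O} (f : S.B.Arr x b b')
    (hf : S.B.AtomicA f) (h : ¬ S.InImage f) :
    S.convAtom f hf = [.be b b' f hf h] := by
  rw [convAtom, dif_neg h]

theorem edgeAct_id {x : SimplexCategory} (e : RawEdge S x) : S.edgeAct (𝟙 x) e = [e] := by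
  cases e with
  | ce c c' f hf => rw [edgeAct, S.C.act_id, cList_atomic S hf]
  | be b b' f hf hn => rw [edgeAct, S.B.act_id, bList_atomic S hf, convAtom_notin S f hf hn]

theorem actList_id {x : SimplexCategory} (l : List (RawEdge S x)) : S.actList (𝟙 x) l = l := by
  induction l with
  | nil => rfl
  | cons e l ih => rw [actList_cons, edgeAct_id, ih]; rfl

theorem actList_actList {x y z : SimplexCategory} (α : y ⟶ x) (β : z ⟶ y)
    (l : List (RawEdge S x)) :
    S.actList β (S.actList α l) = S.actList (β ≫ α) l := by
  induction l with
  | nil => rfl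
  | cons e l ih =>
    rw [actList_cons, actList_append, ih, actList_cons]
    congr 1
    cases e with
    | ce c c' f hf => rw [edgeAct, edgeAct, act_cList, S.C.act_act]
    | be b b' f hf hn => rw [edgeAct, edgeAct, act_bList, S.B.act_act]

theorem chain_actList {x y : SimplexCategory} (α : y ⟶ x) {p q : S.PO}
    {l : List (RawEdge S x)} (h : S.Chain p l q) : S.Chain p (S.actList α l) q := by
  induction l generalizing p with
  | nil => exact h
  | cons e l ih =>
    rw [actList_cons]
    obtain ⟨h1, h2⟩ := h
    refine h1 ▸ S.chain_append ?_ (ih h2)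
    cases e with
    | ce c c' f hf => exact S.chain_cList _
    | be b b' f hf hn => exact S.chain_bList _

theorem chain_edgeAct {x y : SimplexCategory} (α : y ⟶ x) (e : RawEdge S x) :
    S.Chain e.src (S.edgeAct α e) e.tgt := by
  cases e with
  | ce c c' f hf => exact S.chain_cList _
  | be b b' f hf hn => exact S.chain_bList _

/-! ### the pushout simplicial category -/

@[reducible] noncomputable def PC : SCat where
  O := S.PO
  Arr x p q := {l : List (RawEdge S x) // S.Chain p l q}
  aid _ _ := ⟨[], rfl⟩
  comp f g := ⟨f.1 ++ g.1, S.chain_append f.2 g.2⟩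
  act := fun {x y} α {p q} f => ⟨S.actList α f.1, S.chain_actList α f.2⟩
  comp_assoc f g h := Subtype.ext (List.append_assoc _ _ _)
  id_comp f := Subtype.ext rfl
  comp_id f := Subtype.ext (List.append_nil _)
  act_id f := Subtype.ext (S.actList_id _)
  act_act := fun {x y z} α β {a b} f => Subtype.ext (S.actList_actList α β f.1)
  act_comp := fun {x y} α {a b c} f g => Subtype.ext (S.actList_append α f.1 g.1)
  act_aid := fun {x y} α a => Subtype.ext rfl

theorem parr_heq {x : SimplexCategory} {p q p' q' : S.PO} (hp : p = p') (hq : q = q')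
    {u : (S.PC).Arr x p q} {v : (S.PC).Arr x p' q'} (h : u.1 = v.1) : HEq u v := by
  subst hp; subst hq; exact heq_of_eq (Subtype.ext h)

noncomputable def j₀ : SFunctor S.B S.PC where
  obj := S.jobj
  map x b b' f := ⟨S.bList f, S.chain_bList f⟩
  map_aid x b := Subtype.ext (S.bList_aid b)
  map_comp x a b c f g := Subtype.ext (S.bList_comp f g)
  map_act α a b f := Subtype.ext ((S.act_bList α f).symm)

noncomputable def G₀ : SFunctor S.C S.PC where
  obj := Sum.inl
  map x c c' f := ⟨S.cList f, S.chain_cList f⟩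
  map_aid x c := Subtype.ext (S.cList_aid c)
  map_comp x a b c f g := Subtype.ext (S.cList_comp f g)
  map_act α a b f := Subtype.ext ((S.act_cList α f).symm)

theorem hcomm₀ : S.i.comp S.j₀ = S.F.comp S.G₀ := by
  apply SFunctor.ext'
  · intro a; exact S.jobj_i a
  · intro x a b f
    exact S.parr_heq (S.jobj_i a) (S.jobj_i b) (S.bList_imap f)

end Setup
end SCP

namespace SCP
namespace Setup

variable (S : Setup)

theorem pc_isid_iff {x : SimplexCategory} {p q : S.PO} (u : (S.PC).Arr x p q) :
    (S.PC).IsIdA u ↔ u.1 = [] := by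
  constructor
  · rintro ⟨rfl, hu⟩
    exact congrArg Subtype.val (eq_of_heq hu)
  · intro hu
    have h2 := u.2
    rw [hu] at h2
    have hpq : p = q := h2
    subst hpq
    exact ⟨rfl, heq_of_eq (Subtype.ext hu)⟩

theorem pc_atomic_of_single {x : SimplexCategory} {p q : S.PO} {u : (S.PC).Arr x p q}
    (e : RawEdge S x) (he : u.1 = [e]) : (S.PC).AtomicA u := by
  constructor
  · intro h
    rw [pc_isid_iff] at h
    rw [h] at he; exact List.cons_ne_nil _ _ he.symm
  · intro c v w hvw
    have hval : v.1 ++ w.1 = [e] := by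
      have := congrArg Subtype.val hvw
      rw [he] at this; exact this
    cases hv : v.1 with
    | nil => exact Or.inl ((S.pc_isid_iff v).2 hv)
    | cons a t =>
      right
      rw [hv] at hval
      simp only [List.cons_append, List.cons.injEq] at hval
      exact (S.pc_isid_iff w).2 (List.append_eq_nil_iff.1 hval.2).2

theorem pc_atomic_singleton {x : SimplexCategory} {p q : S.PO} {u : (S.PC).Arr x p q}
    (hu : (S.PC).AtomicA u) : ∃ e : RawEdge S x, u.1 = [e] := by
  cases hu1 : u.1 with
  | nil => exact absurd ((S.pc_isid_iff u).2 hu1) hu.1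
  | cons e t =>
    cases t with
    | nil => exact ⟨e, rfl⟩
    | cons e' t' =>
      exfalso
      have h2 := u.2
      rw [hu1] at h2
      have hcomp : (S.PC).comp (⟨[e], h2.1, rfl⟩ : (S.PC).Arr x p (RawEdge.tgt e))
          ⟨e' :: t', h2.2⟩ = u := by
        apply Subtype.ext
        show [e] ++ e' :: t' = u.1
        rw [hu1]; rfl
      rcases hu.2 _ _ _ hcomp with h | h
      · rw [pc_isid_iff] at h; exact List.cons_ne_nil _ _ h
      · rw [pc_isid_iff] at h; exact List.cons_ne_nil _ _ h

noncomputable def build {x : SimplexCategory} :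
    (l : List (RawEdge S x)) → (p q : S.PO) → S.Chain p l q → (S.PC).APath x p q
  | [], p, _q, h =>
      @Eq.rec S.PO p (fun r _ => (S.PC).APath x p r)
        (@SCat.APath.nil S.PC x p) _q (show p = _q from h)
  | e :: l, p, q, h =>
      .cons (⟨[e], h.1, rfl⟩ : (S.PC).Arr x p (RawEdge.tgt e))
        (S.pc_atomic_of_single e rfl) (build l (RawEdge.tgt e) q h.2)

theorem build_nil {x : SimplexCategory} (p q : S.PO) (h : S.Chain p [] q) :
    HEq (build S (x := x) [] p q h) (@SCat.APath.nil S.PC x p) :=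
  eqRec_heq _ _

theorem compP_build {x : SimplexCategory} :
    ∀ (l : List (RawEdge S x)) (p q : S.PO) (h : S.Chain p l q),
      (build S l p q h).compP = ⟨l, h⟩ := by
  intro l
  induction l with
  | nil =>
    intro p q h
    have hpq : p = q := h
    subst hpq
    rw [eq_of_heq (S.build_nil p p h)]
    exact Subtype.ext rfl
  | cons e l ih =>
    intro p q h
    simp only [build, SCat.APath.compP]
    rw [ih]
    exact Subtype.ext rfl

theorem uniq_build {x : SimplexCategory} :
    ∀ {p q : (S.PC).O} (r : (S.PC).APath x p q) (l : List (RawEdge S x))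
      (ch : S.Chain p l q), r.compP = ⟨l, ch⟩ → r = build S l p q ch := by
  intro p q r
  induction r with
  | nil a =>
    intro l ch hc
    have hl : l = [] := (congrArg Subtype.val hc).symm
    subst hl
    exact (eq_of_heq (S.build_nil a a ch)).symm
  | @cons p c q u hu t ih =>
    intro l ch hc
    obtain ⟨e, he⟩ := S.pc_atomic_singleton hu
    have hu2 := u.2
    rw [he] at hu2
    obtain ⟨he1, he2⟩ := hu2
    have htgt : RawEdge.tgt e = c := he2
    subst htgt
    have hl : l = e :: (SCat.APath.compP t).1 := by
      have h5 : u.1 ++ (SCat.APath.compP t).1 = l := congrArg Subtype.val hc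
      rw [he] at h5
      exact h5.symm
    subst hl
    have huu : u = ⟨[e], ch.1, rfl⟩ := Subtype.ext he
    subst huu
    have ht := ih (SCat.APath.compP t).1 ch.2 (Subtype.ext rfl)
    simp only [build]
    rw [← ht]

theorem pc_computad : (S.PC).IsComputad := by
  constructor
  · intro x p q u
    refine ⟨build S u.1 p q u.2, ?_, ?_⟩
    · rw [compP_build]
    · intro r hr
      exact S.uniq_build r u.1 u.2 (hr.trans (show u = ⟨u.1, u.2⟩ from rfl))

  · intro x y α hα p q u hu
    obtain ⟨e, he⟩ := S.pc_atomic_singleton hu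
    have hval : ((S.PC).act α u).1 = S.edgeAct α e := by
      show S.actList α u.1 = _
      rw [he, actList_cons, actList_nil, List.append_nil]
    cases e with
    | ce c c' f hf =>
      have hat : S.C.AtomicA (S.C.act α f) := S.hC.2 α hα f hf
      refine S.pc_atomic_of_single (.ce c c' (S.C.act α f) hat) ?_
      rw [hval]
      exact S.cList_atomic hat
    | be b b' f hf hn =>
      have hat : S.B.AtomicA (S.B.act α f) := S.hB.2 α hα f hf
      have hnotin : ¬ S.InImage (S.B.act α f) := by
        intro hIm
        obtain ⟨⟨a, a', g⟩, h1, h2, h3⟩ := hIm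
        subst h1; subst h2
        have hig : S.i.map y a a' g = S.B.act α f := eq_of_heq h3
        haveI : CategoryTheory.Epi α := hα
        have hsplit : CategoryTheory.IsSplitEpi α := CategoryTheory.isSplitEpi_of_epi α
        have hfact : f = S.i.map x a a' (S.A.act hsplit.exists_splitEpi.some.section_ g) := by
          rw [S.i.map_act, hig, S.B.act_act, hsplit.exists_splitEpi.some.id, S.B.act_id]
        exact hn ⟨⟨a, a', S.A.act hsplit.exists_splitEpi.some.section_ g⟩, rfl, rfl,
          heq_of_eq hfact.symm⟩
      refine S.pc_atomic_of_single (.be b b' (S.B.act α f) hat hnotin) ?_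
      rw [hval]
      rw [show S.edgeAct α (.be b b' f hf hn) = S.bList (S.B.act α f) from rfl,
        S.bList_atomic hat, S.convAtom_notin _ hat hnotin]

end Setup
end SCP

namespace SCP

theorem map_congr_heq {X Y : SCat} {T U : SFunctor X Y} (h : T = U)
    (x : SimplexCategory) (a b : X.O) (f : X.Arr x a b) :
    HEq (T.map x a b f) (U.map x a b f) := by subst h; rfl

theorem aid_heq (D : SCat) (x : SimplexCategory) {a a' : D.O} (h : a = a') :
    HEq (D.aid x a) (D.aid x a') := by subst h; rfl

def arrCast {D : SCat} {x : SimplexCategory} {a b a' b' : D.O} (ha : a = a') (hb : b = b')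
    (f : D.Arr x a b) : D.Arr x a' b' := hb ▸ ha ▸ f

theorem arrCast_heq {D : SCat} {x : SimplexCategory} {a b a' b' : D.O} (ha : a = a')
    (hb : b = b') (f : D.Arr x a b) : HEq (arrCast ha hb f) f := by
  subst ha; subst hb; rfl

theorem arrCast_rfl {D : SCat} {x : SimplexCategory} {a b : D.O} (ha : a = a) (hb : b = b)
    (f : D.Arr x a b) : arrCast ha hb f = f := rfl

namespace Setup

variable {S : Setup} (P : SCat) (j : SFunctor S.B P) (G : SFunctor S.C P)

noncomputable def elimO (p : S.PO) : P.O := Sum.elim G.obj (fun b => j.obj b.1) p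

variable (hcomm : S.i.comp j = S.F.comp G)

include hcomm

theorem hobj_comm (a : S.A.O) : j.obj (S.i.obj a) = G.obj (S.F.obj a) :=
  congrArg (fun T : SFunctor S.A P => T.obj a) hcomm

theorem hmap_comm {x : SimplexCategory} {a a' : S.A.O} (g : S.A.Arr x a a') :
    HEq (j.map x (S.i.obj a) (S.i.obj a') (S.i.map x a a' g))
      (G.map x (S.F.obj a) (S.F.obj a') (S.F.map x a a' g)) :=
  map_congr_heq hcomm x a a' g

theorem elim_jobj (b : S.B.O) : elimO P j G (S.jobj b) = j.obj b := by
  by_cases h : ∃ a, S.i.obj a = b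
  · rw [Setup.jobj, dif_pos h]
    show G.obj (S.F.obj h.choose) = j.obj b
    rw [← hobj_comm P j G hcomm h.choose, h.choose_spec]
  · rw [Setup.jobj, dif_neg h]; rfl

noncomputable def evalEdge {x : SimplexCategory} :
    (e : RawEdge S x) → P.Arr x (elimO P j G e.src) (elimO P j G e.tgt)
  | .ce c c' f _ => G.map x c c' f
  | .be b b' f _ _ =>
      arrCast (elim_jobj P j G hcomm b).symm (elim_jobj P j G hcomm b').symm (j.map x b b' f)

noncomputable def evalList {x : SimplexCategory} :
    (l : List (RawEdge S x)) → (p q : S.PO) → S.Chain p l q →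
      P.Arr x (elimO P j G p) (elimO P j G q)
  | [], p, _q, h =>
      arrCast rfl (congrArg (elimO P j G) (show p = _q from h)) (P.aid x (elimO P j G p))
  | e :: l, p, q, h =>
      P.comp (arrCast (congrArg (elimO P j G) h.1) rfl (evalEdge P j G hcomm e))
        (evalList l e.tgt q h.2)

theorem eval_nil {x : SimplexCategory} (p : S.PO) (h : S.Chain p ([] : List (RawEdge S x)) p) :
    evalList P j G hcomm [] p p h = P.aid x (elimO P j G p) :=
  eq_of_heq (arrCast_heq _ _ _)

theorem eval_cons' {x : SimplexCategory} (e : RawEdge S x) (l : List (RawEdge S x))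
    (p q : S.PO) (h : S.Chain p (e :: l) q) :
    evalList P j G hcomm (e :: l) p q h
      = P.comp (arrCast (congrArg (elimO P j G) h.1) rfl (evalEdge P j G hcomm e))
        (evalList P j G hcomm l e.tgt q h.2) := by
  simp only [evalList]

theorem eval_cons {x : SimplexCategory} (e : RawEdge S x) (l : List (RawEdge S x))
    (q : S.PO) (h : S.Chain e.src (e :: l) q) :
    evalList P j G hcomm (e :: l) e.src q h
      = P.comp (evalEdge P j G hcomm e) (evalList P j G hcomm l e.tgt q h.2) := by
  simp only [evalList]
  rw [arrCast_rfl]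

theorem evalList_congr_list {x : SimplexCategory} {l l' : List (RawEdge S x)} (hl : l = l')
    {p q : S.PO} (ch : S.Chain p l q) (ch' : S.Chain p l' q) :
    evalList P j G hcomm l p q ch = evalList P j G hcomm l' p q ch' := by
  subst hl; rfl

theorem evalList_endpoint_heq {x : SimplexCategory} (l : List (RawEdge S x))
    {p q p' q' : S.PO} (hp : p = p') (hq : q = q') (h : S.Chain p l q) (h' : S.Chain p' l q') :
    HEq (evalList P j G hcomm l p q h) (evalList P j G hcomm l p' q' h') := by
  subst hp; subst hq; rfl

theorem evalList_append {x : SimplexCategory} (l m : List (RawEdge S x)) (p r q : S.PO)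
    (h1 : S.Chain p l r) (h2 : S.Chain r m q) :
    evalList P j G hcomm (l ++ m) p q (S.chain_append h1 h2)
      = P.comp (evalList P j G hcomm l p r h1) (evalList P j G hcomm m r q h2) := by
  induction l generalizing p with
  | nil =>
    have hpr : p = r := h1
    subst hpr
    rw [eval_nil P j G hcomm p h1, P.id_comp]
    rfl
  | cons e l ih =>
    have h11 : RawEdge.src e = p := h1.1
    subst h11
    show evalList P j G hcomm (e :: (l ++ m)) (RawEdge.src e) q _ = _
    rw [eval_cons P j G hcomm e (l ++ m) q ⟨rfl, S.chain_append h1.2 h2⟩,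
      evalList_congr_list P j G hcomm rfl _ (S.chain_append h1.2 h2), ih _ h1.2,
      eval_cons P j G hcomm e l r h1, P.comp_assoc]

theorem eval_cListP {x : SimplexCategory} {c c' : S.C.O} (pth : S.C.APath x c c')
    (ch : S.Chain (.inl c) (S.cListP pth) (.inl c')) :
    evalList P j G hcomm (S.cListP pth) (.inl c) (.inl c') ch = G.map x c c' pth.compP := by
  induction pth with
  | nil c =>
    rw [show SCat.APath.compP (.nil c) = S.C.aid x c from rfl, G.map_aid]
    exact eval_nil P j G hcomm (Sum.inl c) ch
  | @cons c m c' f hf pth ih =>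
    show evalList P j G hcomm (RawEdge.ce c m f hf :: S.cListP pth)
      (RawEdge.src (RawEdge.ce c m f hf)) (Sum.inl c') ch = _
    rw [eval_cons P j G hcomm _ _ _ ch]
    show P.comp (evalEdge P j G hcomm (RawEdge.ce c m f hf))
      (evalList P j G hcomm (S.cListP pth) (Sum.inl m) (Sum.inl c') ch.2)
      = G.map x c c' (SCat.APath.cons f hf pth).compP
    rw [ih ch.2, show evalEdge P j G hcomm (RawEdge.ce c m f hf) = G.map x c m f from rfl,
]
    exact (G.map_comp x c m c' f pth.compP).symm

theorem eval_cList {x : SimplexCategory} {c c' : S.C.O} (g : S.C.Arr x c c')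
    (ch : S.Chain (.inl c) (S.cList g) (.inl c')) :
    evalList P j G hcomm (S.cList g) (.inl c) (.inl c') ch = G.map x c c' g := by
  refine Eq.trans (eval_cListP P j G hcomm (decA (S.hC.1 x) g) ch) ?_
  rw [decA_spec (S.hC.1 x) g]

theorem eval_convAtom {x : SimplexCategory} {b b' : S.B.O} (f : S.B.Arr x b b')
    (hf : S.B.AtomicA f) (ch : S.Chain (S.jobj b) (S.convAtom f hf) (S.jobj b')) :
    HEq (evalList P j G hcomm (S.convAtom f hf) (S.jobj b) (S.jobj b') ch)
      (j.map x b b' f) := by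
  by_cases h : S.InImage f
  · obtain ⟨⟨a, a', g⟩, h1, h2, h3⟩ := h
    subst h1; subst h2
    have hg : S.i.map x a a' g = f := eq_of_heq h3
    subst hg
    have hconv := S.convAtom_imap g hf
    rw [evalList_congr_list P j G hcomm hconv ch (hconv ▸ ch)]
    refine HEq.trans (evalList_endpoint_heq P j G hcomm _ (S.jobj_i a) (S.jobj_i a')
      (hconv ▸ ch) (S.chain_cList _)) ?_
    rw [eval_cList P j G hcomm _ (S.chain_cList _)]
    exact (hmap_comm P j G hcomm g).symm
  · have hconv := S.convAtom_notin f hf h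
    have ch2 : S.Chain (S.jobj b) [RawEdge.be b b' f hf h] (S.jobj b') := ⟨rfl, rfl⟩
    rw [evalList_congr_list P j G hcomm hconv ch ch2]
    rw [eval_cons' P j G hcomm _ _ _ _ ch2]
    refine HEq.trans (comp_heq P (elim_jobj P j G hcomm b) (elim_jobj P j G hcomm b')
      (elim_jobj P j G hcomm b')
      (HEq.trans (arrCast_heq _ _ _) (arrCast_heq _ _ _))
      (HEq.trans (heq_of_eq (eval_nil P j G hcomm (S.jobj b') ch2.2))
        (aid_heq P x (elim_jobj P j G hcomm b')))) ?_
    rw [P.comp_id]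

theorem eval_bListP {x : SimplexCategory} {b b' : S.B.O} (pth : S.B.APath x b b')
    (ch : S.Chain (S.jobj b) (S.bListP pth) (S.jobj b')) :
    HEq (evalList P j G hcomm (S.bListP pth) (S.jobj b) (S.jobj b') ch)
      (j.map x b b' pth.compP) := by
  induction pth with
  | nil b =>
    rw [show SCat.APath.compP (.nil b) = S.B.aid x b from rfl, j.map_aid]
    refine HEq.trans (heq_of_eq (eval_nil P j G hcomm (S.jobj b) ch)) ?_
    exact aid_heq P x (elim_jobj P j G hcomm b)
  | @cons b m b' f hf pth ih =>
    show HEq (evalList P j G hcomm (S.convAtom f hf ++ S.bListP pth)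
      (S.jobj b) (S.jobj b') ch) (j.map x b b' (S.B.comp f pth.compP))
    rw [evalList_congr_list P j G hcomm rfl
        (show S.Chain (S.jobj b) (S.convAtom f hf ++ S.bListP pth) (S.jobj b') from ch)
        (S.chain_append (S.chain_convAtom f hf) (S.chain_bListP pth)),
      evalList_append P j G hcomm (S.convAtom f hf) (S.bListP pth) (S.jobj b) (S.jobj m)
        (S.jobj b') (S.chain_convAtom f hf) (S.chain_bListP pth), j.map_comp]
    exact comp_heq P (elim_jobj P j G hcomm b) (elim_jobj P j G hcomm m)
      (elim_jobj P j G hcomm b')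
      (eval_convAtom P j G hcomm f hf _) (ih _)

theorem eval_bList {x : SimplexCategory} {b b' : S.B.O} (g : S.B.Arr x b b')
    (ch : S.Chain (S.jobj b) (S.bList g) (S.jobj b')) :
    HEq (evalList P j G hcomm (S.bList g) (S.jobj b) (S.jobj b') ch) (j.map x b b' g) := by
  refine HEq.trans (eval_bListP P j G hcomm (decA (S.hB.1 x) g) ch) ?_
  rw [decA_spec (S.hB.1 x) g]

theorem eval_edgeAct {x y : SimplexCategory} (α : y ⟶ x) (e : RawEdge S x)
    (ch : S.Chain e.src (S.edgeAct α e) e.tgt) :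
    evalList P j G hcomm (S.edgeAct α e) e.src e.tgt ch
      = P.act α (evalEdge P j G hcomm e) := by
  cases e with
  | ce c c' f hf =>
    show evalList P j G hcomm (S.cList (S.C.act α f)) (Sum.inl c) (Sum.inl c') ch
      = P.act α (G.map x c c' f)
    rw [eval_cList P j G hcomm _ ch, G.map_act]
  | be b b' f hf hn =>
    show evalList P j G hcomm (S.bList (S.B.act α f)) (S.jobj b) (S.jobj b') ch = _
    refine eq_of_heq (HEq.trans (eval_bList P j G hcomm _ ch) ?_)
    rw [j.map_act α b b' f]
    exact act_heq P α (elim_jobj P j G hcomm b).symm (elim_jobj P j G hcomm b').symm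
      (arrCast_heq _ _ _).symm

theorem eval_act {x y : SimplexCategory} (α : y ⟶ x) (l : List (RawEdge S x)) (p q : S.PO)
    (ch : S.Chain p l q) (ch' : S.Chain p (S.actList α l) q) :
    evalList P j G hcomm (S.actList α l) p q ch'
      = P.act α (evalList P j G hcomm l p q ch) := by
  induction l generalizing p with
  | nil =>
    have hpq : p = q := ch
    subst hpq
    show evalList P j G hcomm [] p p ch' = _
    rw [eval_nil P j G hcomm _ ch', eval_nil P j G hcomm _ ch, P.act_aid]
  | cons e l ih =>
    have h11 : RawEdge.src e = p := ch.1
    subst h11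
    show evalList P j G hcomm (S.edgeAct α e ++ S.actList α l) (RawEdge.src e) q ch' = _
    rw [evalList_congr_list P j G hcomm rfl
        (show S.Chain (RawEdge.src e) (S.edgeAct α e ++ S.actList α l) q from ch')
        (S.chain_append (S.chain_edgeAct α e) (S.chain_actList α ch.2)),
      evalList_append P j G hcomm (S.edgeAct α e) (S.actList α l) (RawEdge.src e)
        (RawEdge.tgt e) q (S.chain_edgeAct α e) (S.chain_actList α ch.2),
      eval_edgeAct P j G hcomm α e _, ih (RawEdge.tgt e) ch.2 (S.chain_actList α ch.2),
      eval_cons P j G hcomm e l q ch, P.act_comp]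

noncomputable def wPrime : SFunctor S.PC P where
  obj := elimO P j G
  map x p q u := evalList P j G hcomm u.1 p q u.2
  map_aid x p := eval_nil P j G hcomm p rfl
  map_comp x p r q u v := by
    show evalList P j G hcomm (u.1 ++ v.1) p q _ = _
    rw [evalList_congr_list P j G hcomm rfl _ (S.chain_append u.2 v.2),
      evalList_append P j G hcomm u.1 v.1 p r q u.2 v.2]
  map_act α p q u := by
    show evalList P j G hcomm (S.actList α u.1) p q _ = _
    rw [evalList_congr_list P j G hcomm rfl _ (S.chain_actList α u.2),
      eval_act P j G hcomm α u.1 p q u.2 (S.chain_actList α u.2)]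

theorem j₀_comp_wPrime : S.j₀.comp (wPrime P j G hcomm) = j := by
  apply SFunctor.ext'
  · intro b; exact elim_jobj P j G hcomm b
  · intro x b b' f
    exact eval_bList P j G hcomm f (S.chain_bList f)

theorem G₀_comp_wPrime : S.G₀.comp (wPrime P j G hcomm) = G := by
  apply SFunctor.ext'
  · intro c; rfl
  · intro x c c' f
    exact heq_of_eq (eval_cList P j G hcomm f (S.chain_cList f))

end Setup
end SCP

namespace SCP

theorem SFunctor.comp_assoc' {W X Y Z : SCat} (T : SFunctor W X) (U : SFunctor X Y)
    (V : SFunctor Y Z) : (T.comp U).comp V = T.comp (U.comp V) := rfl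

theorem SFunctor.comp_idF {X Y : SCat} (T : SFunctor X Y) :
    T.comp (SFunctor.idF Y) = T := rfl

namespace Setup

variable (S : Setup)

theorem cListP_inj {x : SimplexCategory} {c c' : S.C.O} :
    ∀ (p q : S.C.APath x c c'), S.cListP p = S.cListP q → p = q := by
  intro p
  induction p with
  | nil a =>
    intro q hq
    cases q with
    | nil => rfl
    | cons f hf t => exact (List.cons_ne_nil _ _ hq.symm).elim
  | @cons a m b f hf t ih =>
    intro q hq
    cases q with
    | nil => exact (List.cons_ne_nil _ _ hq).elim
    | @cons _ m' _ f' hf' t' =>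
      simp only [cListP] at hq
      injection hq with h1 h2
      injection h1 with e1 e2 e3
      subst e2
      have hff : f = f' := eq_of_heq e3
      subst hff
      have := ih t' h2
      subst this
      rfl

theorem cList_inj {x : SimplexCategory} {c c' : S.C.O} {f f' : S.C.Arr x c c'}
    (h : S.cList f = S.cList f') : f = f' := by
  have h4 : decA (S.hC.1 x) f = decA (S.hC.1 x) f' := S.cListP_inj _ _ h
  rw [← decA_spec (S.hC.1 x) f, ← decA_spec (S.hC.1 x) f', h4]

end Setup
end SCP

/-- Simplicial subcomputad inclusions are stable under pushout: in a pushout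
square of simplicial categories in which `i : A ↪ B` is a simplicial subcomputad
inclusion and `F : A → C` is a functor of simplicial computads between
simplicial computads, the pushout `P` is a simplicial computad and the induced
map `G : C → P` is a simplicial subcomputad inclusion. -/
theorem subcomputad_stable_under_pushout
    (A B C P : SCat)
    (hA : A.IsComputad) (hB : B.IsComputad) (hC : C.IsComputad)
    (i : SFunctor A B) (hi : i.IsSubcomputadInclusion)
    (F : SFunctor A C) (hF : F.IsComputadFunctor)
    (j : SFunctor B P) (G : SFunctor C P)
    (hcomm : i.comp j = F.comp G)
    (huniv : ∀ (Q : SCat) (u : SFunctor B Q) (v : SFunctor C Q),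
      i.comp u = F.comp v →
        ∃! w : SFunctor P Q, j.comp w = u ∧ G.comp w = v) :
    P.IsComputad ∧ G.IsSubcomputadInclusion := by
  classical
  let S : SCP.Setup := ⟨A, B, C, i, F, hA, hB, hC, hi, hF⟩
  obtain ⟨w, ⟨hw1, hw2⟩, -⟩ := huniv S.PC S.j₀ S.G₀ S.hcomm₀
  let w' : SFunctor S.PC P := SCP.Setup.wPrime P j G hcomm
  have hw'1 : S.j₀.comp w' = j := SCP.Setup.j₀_comp_wPrime (S := S) P j G hcomm
  have hw'2 : S.G₀.comp w' = G := SCP.Setup.G₀_comp_wPrime (S := S) P j G hcomm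
  obtain ⟨z, -, zuniq⟩ := huniv P j G hcomm
  have hid1 : w.comp w' = SFunctor.idF P := by
    have h1 : w.comp w' = z := by
      refine zuniq _ ⟨?_, ?_⟩
      · rw [show j.comp (w.comp w') = (j.comp w).comp w' from rfl, hw1, hw'1]
      · rw [show G.comp (w.comp w') = (G.comp w).comp w' from rfl, hw2, hw'2]
    have h2 : SFunctor.idF P = z := by
      refine zuniq _ ⟨?_, ?_⟩
      · exact SCP.SFunctor.comp_idF j
      · exact SCP.SFunctor.comp_idF G
    rw [h1, ← h2]
  -- pointwise consequences on objects
  have hobj0 : ∀ p : S.PO, w.obj (SCP.Setup.elimO P j G p) = p := by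
    intro p
    cases p with
    | inl c => exact congrArg (fun T : SFunctor C S.PC => T.obj c) hw2
    | inr bb =>
      obtain ⟨b, hb⟩ := bb
      have h1 : w.obj (j.obj b) = S.jobj b :=
        congrArg (fun T : SFunctor B S.PC => T.obj b) hw1
      rw [show SCP.Setup.elimO P j G (Sum.inr ⟨b, hb⟩ : S.PO) = j.obj b from rfl, h1,
        S.jobj_notin hb]
  have hid2 : w'.comp w = SFunctor.idF S.PC := by
    apply SCP.SFunctor.ext'
    · exact hobj0
    · intro x p q u
      obtain ⟨l, ch⟩ := u
      induction l generalizing p with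
      | nil =>
        have hpq : p = q := ch
        subst hpq
        show HEq (w.map x _ _ (SCP.Setup.evalList P j G hcomm [] p p ch)) _
        rw [SCP.Setup.eval_nil P j G hcomm p ch, w.map_aid]
        exact HEq.trans (SCP.aid_heq S.PC x (hobj0 p)) (heq_of_eq (Subtype.ext rfl))
      | cons e l ih =>
        have h11 : SCP.Setup.RawEdge.src e = p := ch.1
        subst h11
        show HEq (w.map x _ _
          (SCP.Setup.evalList P j G hcomm (e :: l) e.src q ch)) _
        rw [SCP.Setup.eval_cons P j G hcomm e l q ch, w.map_comp]
        have hedge : HEq (w.map x _ _ (SCP.Setup.evalEdge P j G hcomm e))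
            ((⟨[e], rfl, rfl⟩ : (S.PC).Arr x e.src e.tgt)) := by
          cases e with
          | ce c c' f hf =>
            refine HEq.trans (SCP.map_congr_heq hw2 x c c' f) ?_
            exact heq_of_eq (Subtype.ext (S.cList_atomic hf))
          | be b b' f hf hn =>
            refine HEq.trans (SCP.map_heq w (SCP.Setup.elim_jobj P j G hcomm b)
              (SCP.Setup.elim_jobj P j G hcomm b') (SCP.arrCast_heq _ _ _)) ?_
            refine HEq.trans (SCP.map_congr_heq hw1 x b b' f) ?_
            refine heq_of_eq (Subtype.ext ?_)
            show S.bList f = [SCP.Setup.RawEdge.be b b' f hf hn]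
            rw [S.bList_atomic hf, S.convAtom_notin f hf hn]
        refine HEq.trans (SCP.comp_heq S.PC (hobj0 e.src) (hobj0 e.tgt) (hobj0 q)
          hedge (ih e.tgt ch.2)) ?_
        exact heq_of_eq (Subtype.ext rfl)
  constructor
  · exact SCP.inv_computad w' w hid2 hid1 S.pc_computad
  · refine ⟨?_, ?_, ?_⟩
    · -- computad functor
      intro x c c' f hf
      left
      have h1 : (S.PC).AtomicA (S.G₀.map x c c' f) :=
        S.pc_atomic_of_single (.ce c c' f hf) (S.cList_atomic hf)
      have e1 : (Sum.inl c : S.PO) = w.obj (G.obj c) :=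
        (congrArg (fun T : SFunctor C S.PC => T.obj c) hw2).symm
      have e2 : (Sum.inl c' : S.PO) = w.obj (G.obj c') :=
        (congrArg (fun T : SFunctor C S.PC => T.obj c') hw2).symm
      have h3 : (S.PC).AtomicA (w.map x (G.obj c) (G.obj c') (G.map x c c' f)) :=
        SCP.atomic_heq S.PC e1 e2 (SCP.map_congr_heq hw2 x c c' f).symm h1
      have h4 : P.AtomicA (w'.map x _ _ (w.map x (G.obj c) (G.obj c') (G.map x c c' f))) :=
        SCP.inv_atomic_map w' w hid2 hid1 h3
      exact SCP.atomic_heq P (SCP.inv_obj w w' hid1 (G.obj c))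
        (SCP.inv_obj w w' hid1 (G.obj c')) (SCP.inv_map w w' hid1 (G.map x c c' f)) h4
    · -- injective on objects
      intro c c' h
      have h1 : w.obj (G.obj c) = (Sum.inl c : S.PO) :=
        congrArg (fun T : SFunctor C S.PC => T.obj c) hw2
      have h2 : w.obj (G.obj c') = (Sum.inl c' : S.PO) :=
        congrArg (fun T : SFunctor C S.PC => T.obj c') hw2
      rw [h] at h1
      rw [h1] at h2
      exact Sum.inl.inj h2
    · -- faithful
      intro x c c' f f' h
      have e1 := SCP.map_congr_heq hw2 x c c' f
      have e2 := SCP.map_congr_heq hw2 x c c' f'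
      have h0 : (G.comp w).map x c c' f = (G.comp w).map x c c' f' := by
        show w.map x _ _ (G.map x c c' f) = w.map x _ _ (G.map x c c' f')
        rw [h]
      have h2 : S.G₀.map x c c' f = S.G₀.map x c c' f' :=
        eq_of_heq ((e1.symm.trans (heq_of_eq h0)).trans e2)
      exact S.cList_inj (congrArg Subtype.val h2)
end

section
/- If A ↪ B is a simplicial subcomputad inclusion, then A is closed under factorizations in B: whenever f and g are composable arrows of B with the composite g ∘ f lying in (the image of) A, both f and g lie in A. -/
open CategoryTheory

/-- An arrow of `B` lies in (the image of) the subcomputad `A`. -/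
def InImage {A B : SCat} (i : SFunctor A B) {x : SimplexCategory} {u v : B.O}
    (f : B.Arr x u v) : Prop :=
  ∃ (a b : A.O) (g : A.Arr x a b),
    i.obj a = u ∧ i.obj b = v ∧ HEq (i.map x a b g) f

/-- Concatenation of composable strings of atomic arrows. -/
def SCat.APath.append {C : SCat} {x : SimplexCategory} :
    ∀ {a b c : C.O}, C.APath x a b → C.APath x b c → C.APath x a c
  | _, _, _, .nil _, q => q
  | _, _, _, .cons f hf p, q => .cons f hf (p.append q)

lemma SCat.APath.append_compP {C : SCat} {x : SimplexCategory} :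
    ∀ {a b c : C.O} (p : C.APath x a b) (q : C.APath x b c),
      (p.append q).compP = C.comp p.compP q.compP
  | _, _, _, .nil a, q => by
      simp only [APath.append, APath.compP, C.id_comp]
  | _, _, _, .cons f hf p, q => by
      simp only [APath.append, APath.compP, append_compP p q, C.comp_assoc]

/-- Key lemma: the image of a string of atomic arrows of `A` admits an atomic
decomposition in `B` such that any splitting of that decomposition has both
halves in the image of `A`. -/
lemma image_path_exists (A B : SCat) (i : SFunctor A B)
    (hi : i.IsSubcomputadInclusion) {x : SimplexCategory} :
    ∀ {a b : A.O} (p : A.APath x a b),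
      ∃ P : B.APath x (i.obj a) (i.obj b),
        P.compP = i.map x a b p.compP ∧
        ∀ (m : B.O) (q1 : B.APath x (i.obj a) m) (q2 : B.APath x m (i.obj b)),
          q1.append q2 = P → InImage i q1.compP ∧ InImage i q2.compP := by
  intro a b p
  induction p with
  | nil a =>
      refine ⟨.nil (i.obj a), by simp [SCat.APath.compP, i.map_aid], ?_⟩
      intro m q1 q2 h
      cases q1 with
      | nil =>
          simp only [SCat.APath.append] at h
          subst h
          exact ⟨⟨a, a, A.aid x a, rfl, rfl, heq_of_eq (i.map_aid x a)⟩,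
                 ⟨a, a, A.aid x a, rfl, rfl, heq_of_eq (i.map_aid x a)⟩⟩
      | cons f' hf' q1' =>
          simp only [SCat.APath.append] at h
          exact absurd h (by intro h; injection h)
  | cons f hf p ih =>
      rename_i a b0 b
      obtain ⟨P', hP', hsplit⟩ := ih
      rcases hi.1 f hf with hat | hid
      · -- image of f is atomic
        refine ⟨.cons (i.map x a b0 f) hat P', ?_, ?_⟩
        · simp only [SCat.APath.compP, hP', i.map_comp]
        · intro m q1 q2 h
          cases q1 with
          | nil =>
              simp only [SCat.APath.append] at h
              constructor
              · exact ⟨a, a, A.aid x a, rfl, rfl, heq_of_eq (i.map_aid x a)⟩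
              · subst h
                refine ⟨a, b, A.comp f p.compP, rfl, rfl, heq_of_eq ?_⟩
                simp only [SCat.APath.compP, hP', i.map_comp]
          | cons f' hf' q1' =>
              simp only [SCat.APath.append] at h
              injection h with h1 h2 h3 h4 h5
              subst h2
              have h2' : f' = i.map x a b0 f := eq_of_heq h4
              have h4' : q1'.append q2 = P' := eq_of_heq h5
              obtain ⟨him1, him2⟩ := hsplit m q1' q2 h4'
              refine ⟨?_, him2⟩
              obtain ⟨a1, b1, g1, ea1, eb1, hg1⟩ := him1
              have ea1' : a1 = b0 := hi.2.1 ea1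
              subst ea1'
              subst eb1
              have hg1' : i.map x a1 b1 g1 = q1'.compP := eq_of_heq hg1
              refine ⟨a, b1, A.comp f g1, rfl, rfl, heq_of_eq ?_⟩
              simp only [SCat.APath.compP, i.map_comp, hg1', h2']
      · -- image of f is an identity
        obtain ⟨e, hh⟩ := hid
        -- generalize the arrows whose types mention `i.obj b0`, then subst `e`
        revert hh
        generalize hF : i.map x a b0 f = F
        generalize hM : i.map x b0 b p.compP = M
        have hmapcomp : i.map x a b (SCat.APath.compP (SCat.APath.cons f hf p))
            = B.comp F M := by
          rw [← hF, ← hM]; simp only [SCat.APath.compP, i.map_comp]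
        rw [hM] at hP'
        clear hF hM
        revert hmapcomp hsplit hP' P' F M
        generalize i.obj b0 = t at e ⊢
        intro P' hsplit F M hP' hmapcomp hh
        -- now e : i.obj a = t, subst t
        subst e
        have hF' : F = B.aid x (i.obj a) := eq_of_heq hh
        refine ⟨P', ?_, hsplit⟩
        rw [hmapcomp, hF', B.id_comp, hP']

/-- If `A ↪ B` is a simplicial subcomputad inclusion then `A` is closed under
factorizations in `B`: whenever `f` and `g` are composable arrows of `B` whose
composite lies in `A`, both `f` and `g` lie in `A`. -/
theorem subcomputad_closed_under_factorization
    (A B : SCat) (hA : A.IsComputad) (hB : B.IsComputad)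
    (i : SFunctor A B) (hi : i.IsSubcomputadInclusion)
    {x : SimplexCategory} {u v w : B.O}
    (f : B.Arr x u v) (g : B.Arr x v w)
    (hfg : InImage i (B.comp f g)) :
    InImage i f ∧ InImage i g := by
  obtain ⟨a, bw, h, ea, eb, hh⟩ := hfg
  subst ea; subst eb
  have hmap : i.map x a bw h = B.comp f g := eq_of_heq hh
  obtain ⟨p, hp, -⟩ := hA.1 x h
  obtain ⟨P, hPc, hPsplit⟩ := image_path_exists A B i hi p
  obtain ⟨pf, hpf, -⟩ := hB.1 x f
  obtain ⟨pg, hpg, -⟩ := hB.1 x g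
  obtain ⟨P0, hP0, huniq⟩ := hB.1 x (B.comp f g)
  have h1 : P = P0 := huniq P (by rw [hPc, hp, hmap])
  have h2 : pf.append pg = P0 :=
    huniq _ (by rw [SCat.APath.append_compP, hpf, hpg])
  obtain ⟨hf', hg'⟩ := hPsplit v pf pg (by rw [h2, h1])
  rw [hpf] at hf'; rw [hpg] at hg'
  exact ⟨hf', hg'⟩
end

section
/- Let p : E → B be an inner fibration of simplicial sets with E and B quasi-categories, and suppose every edge of B admits a p-cocartesian lift with specified source. If χ : e → e' and ψ : e → e'' are edges of E that are both p-cocartesian, and σ is a 2-simplex of E with faces χ (as the 0→1 edge), ψ (as the 0→2 edge), and third edge τ : e' → e'' (the 1→2 edge) such that p(τ) is an equivalence (invertible in the homotopy category of B), then τ is an equivalence in E. -/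
open CategoryTheory Simplicial SSet SimplexCategory

universe u

/-- `p` is an inner fibration: it lifts against all inner horn inclusions. -/
def IsInnerFibration {E B : SSet.{u}} (p : E ⟶ B) : Prop :=
  ∀ ⦃n : ℕ⦄ ⦃i : Fin (n + 1)⦄, 0 < i → i < Fin.last n →
    ∀ (u : (Λ[n, i] : SSet.{u}) ⟶ E) (v : Δ[n] ⟶ B),
      u ≫ p = (Λ[n, i]).ι ≫ v →
      ∃ w : Δ[n] ⟶ E, (Λ[n, i]).ι ≫ w = u ∧ w ≫ p = v

/-- The initial edge `Δ^{0,1} → Λ^{n,0}` of the left outer horn, for `n ≥ 2`. -/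
noncomputable def hornInitialEdge (n : ℕ) (hn : 2 ≤ n) :
    (Δ[1] : SSet.{u}) ⟶ Λ[n, 0] :=
  SSet.yonedaEquiv.symm
    (SSet.horn.edge n 0 0 1 (Fin.zero_le _)
      (by
        have h1 : (1 : Fin (n + 1)).val = 1 := by
          rw [Fin.val_one']
          exact Nat.mod_eq_of_lt (by omega)
        have h01 : (0 : Fin (n + 1)) ≠ 1 := by
          intro h
          have h2 := congrArg Fin.val h
          rw [Fin.val_zero, h1] at h2
          exact absurd h2 (by omega)
        rw [Finset.insert_idem,
          Finset.card_insert_of_notMem (by simp [h01]), Finset.card_singleton]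
        exact hn))

/-- An edge `χ` of `E` is `p`-cocartesian: every lifting problem of a left outer
horn `Λ^{n,0} → E` against `Δⁿ → B` (for `n ≥ 2`) whose initial edge is `χ`
admits a solution. -/
noncomputable def IsCocartesianEdge {E B : SSet.{u}} (p : E ⟶ B)
    (χ : Δ[1] ⟶ E) : Prop :=
  ∀ ⦃n : ℕ⦄ (hn : 2 ≤ n) (u : (Λ[n, 0] : SSet.{u}) ⟶ E) (v : Δ[n] ⟶ B),
    u ≫ p = (Λ[n, 0]).ι ≫ v →
    hornInitialEdge n hn ≫ u = χ →
    ∃ w : Δ[n] ⟶ E, (Λ[n, 0]).ι ≫ w = u ∧ w ≫ p = v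

/-- Every edge of `B` admits a `p`-cocartesian lift with specified source. -/
noncomputable def CocartesianLiftsExist {E B : SSet.{u}} (p : E ⟶ B) : Prop :=
  ∀ (α : Δ[1] ⟶ B) (e : Δ[0] ⟶ E),
    e ≫ p = SSet.stdSimplex.map (SimplexCategory.δ 1) ≫ α →
    ∃ χ : Δ[1] ⟶ E, IsCocartesianEdge p χ ∧
      SSet.stdSimplex.map (SimplexCategory.δ 1) ≫ χ = e ∧ χ ≫ p = α

/-- An edge of a quasi-category is an equivalence (invertible in the homotopy
category): it admits an inverse up to witnessing `2`-simplices with degenerate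
long edges. -/
def IsEquivalenceEdge {B : SSet.{u}} (α : Δ[1] ⟶ B) : Prop :=
  ∃ (β : Δ[1] ⟶ B) (s₁ s₂ : Δ[2] ⟶ B),
    SSet.stdSimplex.map (SimplexCategory.δ 2) ≫ s₁ = α ∧
    SSet.stdSimplex.map (SimplexCategory.δ 0) ≫ s₁ = β ∧
    SSet.stdSimplex.map (SimplexCategory.δ 1) ≫ s₁ =
      SSet.stdSimplex.map (SimplexCategory.σ 0) ≫
        SSet.stdSimplex.map (SimplexCategory.δ 1) ≫ α ∧
    SSet.stdSimplex.map (SimplexCategory.δ 2) ≫ s₂ = β ∧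
    SSet.stdSimplex.map (SimplexCategory.δ 0) ≫ s₂ = α ∧
    SSet.stdSimplex.map (SimplexCategory.δ 1) ≫ s₂ =
      SSet.stdSimplex.map (SimplexCategory.σ 0) ≫
        SSet.stdSimplex.map (SimplexCategory.δ 0) ≫ α



namespace CCProof
open Opposite

lemma yE_map {X : SSet.{u}} {m n : SimplexCategory} (f : m ⟶ n) (φ : SSet.stdSimplex.obj n ⟶ X) :
    (SSet.yonedaEquiv (X := X) (n := m)) (SSet.stdSimplex.map f ≫ φ) = X.map f.op ((SSet.yonedaEquiv (X := X) (n := n)) φ) := by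
  exact (SSet.yonedaEquiv_naturality f φ).symm

lemma yE_comp {X Y : SSet.{u}} {n : SimplexCategory} (φ : SSet.stdSimplex.obj n ⟶ X) (F : X ⟶ Y) :
    (SSet.yonedaEquiv (X := Y) (n := n)) (φ ≫ F) = F.app _ ((SSet.yonedaEquiv (X := X) (n := n)) φ) := rfl

lemma yE_symm_map {X : SSet.{u}} {m n : SimplexCategory} (f : m ⟶ n) (x : X.obj (op n)) :
    SSet.stdSimplex.map f ≫ ((SSet.yonedaEquiv (X := X) (n := n))).symm x
      = ((SSet.yonedaEquiv (X := X) (n := m))).symm (X.map f.op x) := by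
  apply ((SSet.yonedaEquiv (X := X) (n := m))).injective
  rw [yE_map, Equiv.apply_symm_apply, Equiv.apply_symm_apply]

lemma yE_symm_comp {X Y : SSet.{u}} {n : SimplexCategory} (x : X.obj (op n)) (F : X ⟶ Y) :
    ((SSet.yonedaEquiv (X := X) (n := n))).symm x ≫ F = ((SSet.yonedaEquiv (X := Y) (n := n))).symm (F.app _ x) := by
  apply ((SSet.yonedaEquiv (X := Y) (n := n))).injective
  rw [yE_comp, Equiv.apply_symm_apply, Equiv.apply_symm_apply]

lemma map_map (X : SSet.{u}) {a b c : SimplexCategory} (f : a ⟶ b) (g : b ⟶ c)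
    (x : X.obj (op c)) : X.map f.op (X.map g.op x) = X.map (f ≫ g).op x := by
  rw [op_comp, FunctorToTypes.map_comp_apply]

/-- existence of a missed vertex for a horn simplex -/
lemma horn_missing {n : ℕ} {i : Fin (n+2)} {m : SimplexCategoryᵒᵖ} (f : (Λ[n+1, i] : SSet.{u}).obj m) :
    ∃ j, j ≠ i ∧ ∀ k, ((stdSimplex.objEquiv) f.1).toOrderHom k ≠ j := by
  obtain ⟨f', hf⟩ := (stdSimplex.objEquiv).symm.surjective f.1
  obtain ⟨f1, hf'⟩ := f
  dsimp at hf
  subst hf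
  rw [Equiv.apply_symm_apply]
  simp [← Set.univ_subset_iff, Set.subset_def, stdSimplex.asOrderHom, SSet.mem_horn_iff, not_or] at hf'
  exact hf'

/-- key independence lemma -/
lemma indep {X : SSet.{u}} {n : ℕ} {i : Fin (n+3)} (σf : ∀ j : Fin (n+3), j ≠ i → X _⦋n+1⦌)
    (compat : ∀ (j k : Fin (n+3)) (hjk : j < k) (hj : j ≠ i) (hk : k ≠ i),
      X.δ (j.castPred (Fin.ne_last_of_lt hjk)) (σf k hk)
        = X.δ (k.pred (Fin.ne_zero_of_lt hjk)) (σf j hj))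
    {m : SimplexCategoryᵒᵖ} (f : m.unop ⟶ ⦋n+2⦌) {j k : Fin (n+3)} (hj : j ≠ i) (hk : k ≠ i)
    (u v : m.unop ⟶ ⦋n+1⦌) (hu : u ≫ δ j = f) (hv : v ≫ δ k = f) :
    X.map u.op (σf j hj) = X.map v.op (σf k hk) := by
  -- core asymmetric case
  have core : ∀ (j k : Fin (n+3)) (hjk : j < k) (hj : j ≠ i) (hk : k ≠ i)
      (u v : m.unop ⟶ ⦋n+1⦌) (hu : u ≫ δ j = f) (hv : v ≫ δ k = f),
      X.map u.op (σf j hj) = X.map v.op (σf k hk) := by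
    intro j k hjk hj hk u v hu hv
    have hk0 : k ≠ 0 := Fin.ne_zero_of_lt hjk
    have hjl : j ≠ Fin.last _ := Fin.ne_last_of_lt hjk
    set k' := k.pred hk0 with hk'
    set j' := j.castPred hjl with hj'
    have hu' : ∀ t, u.toOrderHom t ≠ k' := by
      intro t ht
      have h1 : f.toOrderHom t = k := by
        rw [← hu]
        show (δ j).toOrderHom (u.toOrderHom t) = k
        rw [ht]
        exact Fin.succAbove_pred_of_lt _ _ hjk
      have h2 : f.toOrderHom t ≠ k := by
        rw [← hv]
        exact Fin.succAbove_ne _ _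
      exact h2 h1
    have hv' : ∀ t, v.toOrderHom t ≠ j' := by
      intro t ht
      have h1 : f.toOrderHom t = j := by
        rw [← hv]
        show (δ k).toOrderHom (v.toOrderHom t) = j
        rw [ht]
        exact Fin.succAbove_castPred_of_lt _ _ hjk
      have h2 : f.toOrderHom t ≠ j := by
        rw [← hu]
        exact Fin.succAbove_ne _ _
      exact h2 h1
    have hw : factor_δ (m := m.unop.len) u k' ≫ δ k' = u := factor_δ_spec (m := m.unop.len) u k' hu'
    have hw' : factor_δ (m := m.unop.len) v j' ≫ δ j' = v := factor_δ_spec (m := m.unop.len) v j' hv'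
    have key : δ j' ≫ δ k = δ k' ≫ δ j := by
      have H : j' ≤ k' := by
        rw [Fin.le_def, hj', hk', Fin.coe_castPred, Fin.coe_pred]
        omega
      have := SimplexCategory.δ_comp_δ (i := j') (j := k') H
      rwa [Fin.succ_pred, Fin.castSucc_castPred] at this
    have hww : factor_δ (m := m.unop.len) u k' = factor_δ (m := m.unop.len) v j' := by
      have e1 : factor_δ (m := m.unop.len) u k' ≫ (δ k' ≫ δ j) = factor_δ (m := m.unop.len) v j' ≫ (δ k' ≫ δ j) := by
        have l : factor_δ (m := m.unop.len) u k' ≫ (δ k' ≫ δ j) = f := by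
          rw [← Category.assoc, hw, hu]
        have r : factor_δ (m := m.unop.len) v j' ≫ (δ k' ≫ δ j) = f := by
          rw [← key, ← Category.assoc, hw', hv]
        rw [l, r]
      have : Mono (δ k' ≫ δ j) := mono_comp _ _
      exact (cancel_mono (δ k' ≫ δ j)).mp e1
    calc X.map u.op (σf j hj) = X.map (factor_δ (m := m.unop.len) u k' ≫ δ k').op (σf j hj) := by rw [hw]
      _ = X.map (factor_δ (m := m.unop.len) u k').op (X.δ k' (σf j hj)) := (map_map ..).symm
      _ = X.map (factor_δ (m := m.unop.len) u k').op (X.δ j' (σf k hk)) := by rw [compat j k hjk hj hk]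
      _ = X.map (factor_δ (m := m.unop.len) v j').op (X.δ j' (σf k hk)) := by rw [hww]
      _ = X.map (factor_δ (m := m.unop.len) v j' ≫ δ j').op (σf k hk) := map_map ..
      _ = X.map v.op (σf k hk) := by rw [hw']
  rcases lt_trichotomy j k with h | h | h
  · exact core j k h hj hk u v hu hv
  · subst h
    have : u = v := by
      rw [← cancel_mono (δ j), hu, hv]
    rw [this]
  · exact (core k j h hk hj v u hv hu).symm


section HornMk
variable {X : SSet.{u}} {n : ℕ} {i : Fin (n+3)} (σf : ∀ j : Fin (n+3), j ≠ i → X _⦋n+1⦌)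
  (compat : ∀ (j k : Fin (n+3)) (hjk : j < k) (hj : j ≠ i) (hk : k ≠ i),
      X.δ (j.castPred (Fin.ne_last_of_lt hjk)) (σf k hk)
        = X.δ (k.pred (Fin.ne_zero_of_lt hjk)) (σf j hj))

/-- build a map from a horn out of compatible faces -/
noncomputable def hornHomMk : (Λ[n+2, i] : SSet.{u}) ⟶ X where
  app m := TypeCat.ofHom fun f =>
    X.map (factor_δ (m := m.unop.len) ((stdSimplex.objEquiv) f.1)
      (horn_missing f).choose).op
      (σf (horn_missing f).choose (horn_missing f).choose_spec.1)
  naturality m₁ m₂ h := by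
    ext f
    set g₁ := (stdSimplex.objEquiv) f.1 with hg₁
    set f₂ := (Λ[n+2, i] : SSet.{u}).map h f with hf₂
    set g₂ := (stdSimplex.objEquiv) f₂.1 with hg₂
    have hcomp : g₂ = h.unop ≫ g₁ := by
      rw [hg₂, hf₂]
      show (stdSimplex.objEquiv) ((Δ[n+2] : SSet.{u}).map h f.1) = _
      rw [SSet.stdSimplex.map_apply, Equiv.apply_symm_apply]
    show X.map (factor_δ (m := m₂.unop.len) g₂ _).op _
      = X.map h (X.map (factor_δ (m := m₁.unop.len) g₁ _).op _)
    rw [show X.map h (X.map (factor_δ (m := m₁.unop.len) g₁ (horn_missing f).choose).op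
          (σf _ (horn_missing f).choose_spec.1))
        = X.map (h.unop ≫ factor_δ (m := m₁.unop.len) g₁ (horn_missing f).choose).op
          (σf _ (horn_missing f).choose_spec.1) from map_map X h.unop _ _]
    exact indep σf compat g₂ (horn_missing f₂).choose_spec.1 (horn_missing f).choose_spec.1
      _ _
      (factor_δ_spec (m := m₂.unop.len) g₂ _ (horn_missing f₂).choose_spec.2)
      (by rw [Category.assoc,
            factor_δ_spec (m := m₁.unop.len) g₁ _ (horn_missing f).choose_spec.2, hcomp])

lemma hornHomMk_app {m : SimplexCategoryᵒᵖ} (f : (Λ[n+2, i] : SSet.{u}).obj m)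
    {j : Fin (n+3)} (hj : j ≠ i) (u : m.unop ⟶ ⦋n+1⦌)
    (hu : u ≫ δ j = (stdSimplex.objEquiv) f.1) :
    (hornHomMk σf compat).app m f = X.map u.op (σf j hj) := by
  exact indep σf compat ((stdSimplex.objEquiv) f.1)
    (horn_missing f).choose_spec.1 hj _ u
    (factor_δ_spec (m := m.unop.len) _ _ (horn_missing f).choose_spec.2) hu

lemma hornHomMk_face {j : Fin (n+3)} (hj : j ≠ i) :
    (hornHomMk σf compat).app _ (horn.face i j hj) = σf j hj := by
  have := hornHomMk_app σf compat (horn.face i j hj) hj (𝟙 _)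
    (by rw [Category.id_comp]; exact (Equiv.apply_symm_apply _ _).symm)
  rw [this, op_id, FunctorToTypes.map_id_apply]

lemma app_objEquiv_symm {N : ℕ} {m : SimplexCategoryᵒᵖ} (φ : Δ[N] ⟶ X) (g : m.unop ⟶ ⦋N⦌) :
    φ.app m ((stdSimplex.objEquiv).symm g) = X.map g.op ((SSet.yonedaEquiv (X := X)) φ) := by
  have h1 : ((stdSimplex.objEquiv).symm g : (Δ[N] : SSet.{u}).obj m)
      = (Δ[N] : SSet.{u}).map g.op ((SSet.yonedaEquiv) (𝟙 (Δ[N] : SSet.{u}))) := by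
    rw [SSet.stdSimplex.map_apply]
    congr 1
    show g = g ≫ _
    show g = g ≫ 𝟙 _
    rw [Category.comp_id]
  rw [h1, FunctorToTypes.naturality]
  rfl

lemma incl_app_face (j : Fin (n+3)) (hj : j ≠ i) (φ : Δ[n+2] ⟶ X) :
    ((Λ[n+2, i]).ι ≫ φ).app _ (horn.face i j hj)
      = X.δ j ((SSet.yonedaEquiv (X := X)) φ) := by
  exact app_objEquiv_symm φ (δ j)

end HornMk

section CocartFill
variable {E B : SSet.{u}}

lemma papp_δ (p : E ⟶ B) {n : ℕ} (i : Fin (n+2)) (x : E _⦋n+1⦌) :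
    p.app _ (E.δ i x) = B.δ i (p.app _ x) :=
  ConcreteCategory.congr_hom (SimplicialObject.δ_naturality p i) x

lemma papp_σ (p : E ⟶ B) {n : ℕ} (i : Fin (n+1)) (x : E _⦋n⦌) :
    p.app _ (E.σ i x) = B.σ i (p.app _ x) :=
  ConcreteCategory.congr_hom (SimplicialObject.σ_naturality p i) x

lemma cocartFill2 (p : E ⟶ B) (χ : Δ[1] ⟶ E) (hχ : IsCocartesianEdge p χ)
    (f1 f2 : E _⦋1⦌) (T : B _⦋2⦌) (c : E.δ 1 f2 = E.δ 1 f1)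
    (hp1 : p.app _ f1 = B.δ 1 T) (hp2 : p.app _ f2 = B.δ 2 T)
    (hi : f2 = (SSet.yonedaEquiv (X := E)) χ) :
    ∃ Y : E _⦋2⦌, E.δ 1 Y = f1 ∧ E.δ 2 Y = f2 ∧ p.app _ Y = T := by
  have compat : ∀ (j k : Fin 3) (hjk : j < k) (hj : j ≠ (0 : Fin 3)) (hk : k ≠ (0 : Fin 3)),
      E.δ (j.castPred (Fin.ne_last_of_lt hjk)) ((fun j _ => ![f2, f1, f2] j) k hk)
        = E.δ (k.pred (Fin.ne_zero_of_lt hjk)) ((fun j _ => ![f2, f1, f2] j) j hj) := by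
    intro j k hjk hj hk
    fin_cases j <;> fin_cases k <;>
      first
        | exact absurd hjk (by decide)
        | exact absurd rfl hj
        | exact absurd rfl hk
        | exact c
  set u := hornHomMk (X := E) (n := 0) (i := 0) (fun j _ => ![f2, f1, f2] j) compat with hu
  have hup : u ≫ p = (Λ[2, 0]).ι ≫ ((SSet.yonedaEquiv (X := B))).symm T := by
    apply horn.hom_ext
    intro j hj
    rw [incl_app_face j hj, Equiv.apply_symm_apply]
    show p.app _ (u.app _ (horn.face 0 j hj)) = B.δ j T
    rw [hu, hornHomMk_face]
    fin_cases j
    · exact absurd rfl hj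
    · exact hp1
    · exact hp2
  have hedge : 𝟙 (⦋1⦌ : SimplexCategory) ≫ δ (2 : Fin 3)
      = (stdSimplex.objEquiv)
          ((horn.edge 2 0 0 1 (Fin.zero_le _) (by decide)).1) := by
    rw [Category.id_comp]
    apply SimplexCategory.Hom.ext
    ext t
    fin_cases t <;> rfl
  have hie : ∀ (hn : 2 ≤ 2), hornInitialEdge 2 hn ≫ u = χ := by
    intro hn
    rw [hornInitialEdge, yE_symm_comp, hu]
    refine Eq.trans (congrArg ((SSet.yonedaEquiv (X := E) (n := ⦋1⦌))).symm
      (hornHomMk_app _ compat _ (show (2 : Fin 3) ≠ 0 by decide) (𝟙 _) hedge)) ?_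
    erw [FunctorToTypes.map_id_apply]
    show ((SSet.yonedaEquiv (X := E))).symm f2 = χ
    rw [hi, Equiv.symm_apply_apply]
  obtain ⟨w, hw1, hw2⟩ := hχ (le_refl 2) u (((SSet.yonedaEquiv (X := B))).symm T) hup (hie _)
  have hface : ∀ (j : Fin 3) (hj : j ≠ 0),
      E.δ j ((SSet.yonedaEquiv (X := E)) w) = ![f2, f1, f2] j := by
    intro j hj
    rw [← incl_app_face j hj w, hw1, hu, hornHomMk_face]
  refine ⟨(SSet.yonedaEquiv (X := E)) w, hface 1 (by decide), hface 2 (by decide), ?_⟩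
  rw [← yE_comp, hw2, Equiv.apply_symm_apply]

lemma cocartFill3 (p : E ⟶ B) (χ : Δ[1] ⟶ E) (hχ : IsCocartesianEdge p χ)
    (f1 f2 f3 : E _⦋2⦌) (T : B _⦋3⦌)
    (c12 : E.δ 1 f2 = E.δ 1 f1) (c13 : E.δ 1 f3 = E.δ 2 f1) (c23 : E.δ 2 f3 = E.δ 2 f2)
    (hp1 : p.app _ f1 = B.δ 1 T) (hp2 : p.app _ f2 = B.δ 2 T) (hp3 : p.app _ f3 = B.δ 3 T)
    (hi : E.δ 2 f3 = (SSet.yonedaEquiv (X := E)) χ) :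
    ∃ Y : E _⦋3⦌, E.δ 1 Y = f1 ∧ E.δ 2 Y = f2 ∧ E.δ 3 Y = f3 ∧ p.app _ Y = T := by
  have compat : ∀ (j k : Fin 4) (hjk : j < k) (hj : j ≠ (0 : Fin 4)) (hk : k ≠ (0 : Fin 4)),
      E.δ (j.castPred (Fin.ne_last_of_lt hjk)) ((fun j _ => ![f3, f1, f2, f3] j) k hk)
        = E.δ (k.pred (Fin.ne_zero_of_lt hjk)) ((fun j _ => ![f3, f1, f2, f3] j) j hj) := by
    intro j k hjk hj hk
    fin_cases j <;> fin_cases k <;>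
      first
        | exact absurd hjk (by decide)
        | exact absurd rfl hj
        | exact absurd rfl hk
        | exact c12
        | exact c13
        | exact c23
  set u := hornHomMk (X := E) (n := 1) (i := 0) (fun j _ => ![f3, f1, f2, f3] j) compat with hu
  have hup : u ≫ p = (Λ[3, 0]).ι ≫ ((SSet.yonedaEquiv (X := B))).symm T := by
    apply horn.hom_ext
    intro j hj
    rw [incl_app_face j hj, Equiv.apply_symm_apply]
    show p.app _ (u.app _ (horn.face 0 j hj)) = B.δ j T
    rw [hu, hornHomMk_face]
    fin_cases j
    · exact absurd rfl hj
    · exact hp1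
    · exact hp2
    · exact hp3
  have hedge : δ (2 : Fin 3) ≫ δ (3 : Fin 4)
      = (stdSimplex.objEquiv)
          ((horn.edge 3 0 0 1 (Fin.zero_le _) (by decide)).1) := by
    apply SimplexCategory.Hom.ext
    ext t
    fin_cases t <;> rfl
  have hie : ∀ (hn : 2 ≤ 3), hornInitialEdge 3 hn ≫ u = χ := by
    intro hn
    rw [hornInitialEdge, yE_symm_comp, hu]
    refine Eq.trans (congrArg ((SSet.yonedaEquiv (X := E) (n := ⦋1⦌))).symm
      (hornHomMk_app _ compat _ (show (3 : Fin 4) ≠ 0 by decide) (δ (2 : Fin 3)) hedge)) ?_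
    show ((SSet.yonedaEquiv (X := E))).symm (E.δ 2 f3) = χ
    rw [hi, Equiv.symm_apply_apply]
  obtain ⟨w, hw1, hw2⟩ := hχ (by omega) u (((SSet.yonedaEquiv (X := B))).symm T) hup (hie _)
  have hface : ∀ (j : Fin 4) (hj : j ≠ 0),
      E.δ j ((SSet.yonedaEquiv (X := E)) w) = ![f3, f1, f2, f3] j := by
    intro j hj
    rw [← incl_app_face j hj w, hw1, hu, hornHomMk_face]
  refine ⟨(SSet.yonedaEquiv (X := E)) w, hface 1 (by decide), hface 2 (by decide),
    hface 3 (by decide), ?_⟩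
  rw [← yE_comp, hw2, Equiv.apply_symm_apply]

end CocartFill

section Ident
variable {X : SSet.{u}}

lemma dd01 (Y : X _⦋3⦌) : X.δ 0 (X.δ 1 Y) = X.δ 0 (X.δ 0 Y) :=
  ConcreteCategory.congr_hom (X.δ_comp_δ (i := 0) (j := 0) (by decide)) Y
lemma dd02 (Y : X _⦋3⦌) : X.δ 0 (X.δ 2 Y) = X.δ 1 (X.δ 0 Y) :=
  ConcreteCategory.congr_hom (X.δ_comp_δ (i := 0) (j := 1) (by decide)) Y
lemma dd03 (Y : X _⦋3⦌) : X.δ 0 (X.δ 3 Y) = X.δ 2 (X.δ 0 Y) :=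
  ConcreteCategory.congr_hom (X.δ_comp_δ (i := 0) (j := 2) (by decide)) Y
lemma dd12 (Y : X _⦋3⦌) : X.δ 1 (X.δ 2 Y) = X.δ 1 (X.δ 1 Y) :=
  ConcreteCategory.congr_hom (X.δ_comp_δ (i := 1) (j := 1) (by decide)) Y
lemma dd13 (Y : X _⦋3⦌) : X.δ 1 (X.δ 3 Y) = X.δ 2 (X.δ 1 Y) :=
  ConcreteCategory.congr_hom (X.δ_comp_δ (i := 1) (j := 2) (by decide)) Y
lemma dd23 (Y : X _⦋3⦌) : X.δ 2 (X.δ 3 Y) = X.δ 2 (X.δ 2 Y) :=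
  ConcreteCategory.congr_hom (X.δ_comp_δ (i := 2) (j := 2) (by decide)) Y

lemma ee01 (S : X _⦋2⦌) : X.δ 0 (X.δ 1 S) = X.δ 0 (X.δ 0 S) :=
  ConcreteCategory.congr_hom (X.δ_comp_δ (i := 0) (j := 0) (by decide)) S
lemma ee02 (S : X _⦋2⦌) : X.δ 0 (X.δ 2 S) = X.δ 1 (X.δ 0 S) :=
  ConcreteCategory.congr_hom (X.δ_comp_δ (i := 0) (j := 1) (by decide)) S
lemma ee12 (S : X _⦋2⦌) : X.δ 1 (X.δ 2 S) = X.δ 1 (X.δ 1 S) :=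
  ConcreteCategory.congr_hom (X.δ_comp_δ (i := 1) (j := 1) (by decide)) S

lemma ds00 (x : X _⦋1⦌) : X.δ 0 (X.σ 0 x) = x :=
  ConcreteCategory.congr_hom (X.δ_comp_σ_self (i := 0)) x
lemma ds10 (x : X _⦋1⦌) : X.δ 1 (X.σ 0 x) = x :=
  ConcreteCategory.congr_hom (X.δ_comp_σ_succ (i := 0)) x
lemma ds11 (x : X _⦋1⦌) : X.δ 1 (X.σ 1 x) = x :=
  ConcreteCategory.congr_hom (X.δ_comp_σ_self (i := 1)) x
lemma ds21 (x : X _⦋1⦌) : X.δ 2 (X.σ 1 x) = x :=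
  ConcreteCategory.congr_hom (X.δ_comp_σ_succ (i := 1)) x
lemma ds01 (x : X _⦋1⦌) : X.δ 0 (X.σ 1 x) = X.σ 0 (X.δ 0 x) :=
  ConcreteCategory.congr_hom (X.δ_comp_σ_of_le (i := 0) (j := 0) (by decide)) x
lemma ds20 (x : X _⦋1⦌) : X.δ 2 (X.σ 0 x) = X.σ 0 (X.δ 1 x) :=
  ConcreteCategory.congr_hom (X.δ_comp_σ_of_gt (i := 1) (j := 0) (by decide)) x


lemma face_of_comp {n : ℕ} (i : Fin (n+2)) (φ : Δ[n+1] ⟶ X) :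
    X.δ i ((SSet.yonedaEquiv (X := X)) φ)
      = (SSet.yonedaEquiv (X := X)) (SSet.stdSimplex.map (SimplexCategory.δ i) ≫ φ) :=
  (yE_map _ _).symm

lemma deg_of_comp {n : ℕ} (i : Fin (n+1)) (φ : Δ[n] ⟶ X) :
    X.σ i ((SSet.yonedaEquiv (X := X)) φ)
      = (SSet.yonedaEquiv (X := X)) (SSet.stdSimplex.map (SimplexCategory.σ i) ≫ φ) :=
  (yE_map _ _).symm

end Ident



section Fill
variable {X : SSet.{u}}

lemma qcFill [Quasicategory X] {n : ℕ} (i : Fin (n+3)) (h0 : 0 < i) (hl : i < Fin.last (n+2))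
    (σf : ∀ j : Fin (n+3), j ≠ i → X _⦋n+1⦌)
    (compat : ∀ (j k : Fin (n+3)) (hjk : j < k) (hj : j ≠ i) (hk : k ≠ i),
      X.δ (j.castPred (Fin.ne_last_of_lt hjk)) (σf k hk)
        = X.δ (k.pred (Fin.ne_zero_of_lt hjk)) (σf j hj)) :
    ∃ Y : X _⦋n+2⦌, ∀ j hj, X.δ j Y = σf j hj := by
  obtain ⟨w, hw⟩ := Quasicategory.hornFilling h0 hl (hornHomMk σf compat)
  refine ⟨(SSet.yonedaEquiv (X := X)) w, fun j hj => ?_⟩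
  rw [← incl_app_face j hj w, ← hw, hornHomMk_face]

lemma qcFill31 [Quasicategory X] (f0 f2 f3 : X _⦋2⦌)
    (c02 : X.δ 0 f2 = X.δ 1 f0) (c03 : X.δ 0 f3 = X.δ 2 f0) (c23 : X.δ 2 f3 = X.δ 2 f2) :
    ∃ Y : X _⦋3⦌, X.δ 0 Y = f0 ∧ X.δ 2 Y = f2 ∧ X.δ 3 Y = f3 := by
  obtain ⟨Y, hY⟩ := qcFill (n := 1) (1 : Fin 4) (by decide) (by decide)
    (fun j _ => ![f0, f0, f2, f3] j)
    (by
      intro j k hjk hj hk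
      fin_cases j <;> fin_cases k <;>
        first
          | exact absurd hjk (by decide)
          | exact absurd rfl hj
          | exact absurd rfl hk
          | exact c02
          | exact c03
          | exact c23)
  exact ⟨Y, hY 0 (by decide), hY 2 (by decide), hY 3 (by decide)⟩

lemma qcFill32 [Quasicategory X] (f0 f1 f3 : X _⦋2⦌)
    (c01 : X.δ 0 f1 = X.δ 0 f0) (c03 : X.δ 0 f3 = X.δ 2 f0) (c13 : X.δ 1 f3 = X.δ 2 f1) :
    ∃ Y : X _⦋3⦌, X.δ 0 Y = f0 ∧ X.δ 1 Y = f1 ∧ X.δ 3 Y = f3 := by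
  obtain ⟨Y, hY⟩ := qcFill (n := 1) (2 : Fin 4) (by decide) (by decide)
    (fun j _ => ![f0, f1, f0, f3] j)
    (by
      intro j k hjk hj hk
      fin_cases j <;> fin_cases k <;>
        first
          | exact absurd hjk (by decide)
          | exact absurd rfl hj
          | exact absurd rfl hk
          | exact c01
          | exact c03
          | exact c13)
  exact ⟨Y, hY 0 (by decide), hY 1 (by decide), hY 3 (by decide)⟩

end Fill

end CCProof

open CCProof in
/-- Conservativity: if `χ : e → e'` and `ψ : e → e''` are `p`-cocartesian edges,
`σ` is a `2`-simplex with `0→1` edge `χ`, `0→2` edge `ψ` and `1→2` edge `τ`, and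
`p(τ)` is an equivalence in `B`, then `τ` is an equivalence in `E`. -/
theorem cocartesian_conservativity
    {E B : SSet} [Quasicategory E] [Quasicategory B] (p : E ⟶ B)
    (hp : IsInnerFibration p) (hlift : CocartesianLiftsExist p)
    (χ ψ τ : Δ[1] ⟶ E) (σ' : Δ[2] ⟶ E)
    (h01 : SSet.stdSimplex.map (SimplexCategory.δ 2) ≫ σ' = χ)
    (h02 : SSet.stdSimplex.map (SimplexCategory.δ 1) ≫ σ' = ψ)
    (h12 : SSet.stdSimplex.map (SimplexCategory.δ 0) ≫ σ' = τ)
    (hχ : IsCocartesianEdge p χ) (hψ : IsCocartesianEdge p ψ)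
    (hτ : IsEquivalenceEdge (τ ≫ p)) :
    IsEquivalenceEdge τ := by
  classical
  -- elements
  set a := (SSet.yonedaEquiv (X := E)) χ with hadef
  set b := (SSet.yonedaEquiv (X := E)) ψ with hbdef
  set t := (SSet.yonedaEquiv (X := E)) τ with htdef
  set S := (SSet.yonedaEquiv (X := E)) σ' with hSdef
  have hS2 : E.δ 2 S = a := by rw [hSdef, face_of_comp, h01]
  have hS1 : E.δ 1 S = b := by rw [hSdef, face_of_comp, h02]
  have hS0 : E.δ 0 S = t := by rw [hSdef, face_of_comp, h12]
  obtain ⟨β, s₁, s₂, e1, e2, e3, e4, e5, e6⟩ := hτ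
  set g := (SSet.yonedaEquiv (X := B)) β with hgdef
  set Q1 := (SSet.yonedaEquiv (X := B)) s₁ with hQ1def
  set Q2 := (SSet.yonedaEquiv (X := B)) s₂ with hQ2def
  have hpt : (SSet.yonedaEquiv (X := B)) (τ ≫ p) = p.app _ t := by rw [yE_comp, htdef]
  have q12 : B.δ 2 Q1 = p.app _ t := by rw [hQ1def, face_of_comp, e1, hpt]
  have q10 : B.δ 0 Q1 = g := by rw [hQ1def, face_of_comp, e2, hgdef]
  have q11 : B.δ 1 Q1 = B.σ 0 (B.δ 1 (p.app _ t)) := by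
    rw [hQ1def, face_of_comp, e3, ← hpt, face_of_comp, deg_of_comp]
  have q22 : B.δ 2 Q2 = g := by rw [hQ2def, face_of_comp, e4, hgdef]
  have q20 : B.δ 0 Q2 = p.app _ t := by rw [hQ2def, face_of_comp, e5, hpt]
  have q21 : B.δ 1 Q2 = B.σ 0 (B.δ 0 (p.app _ t)) := by
    rw [hQ2def, face_of_comp, e6, ← hpt, face_of_comp, deg_of_comp]
  -- vertex identities
  have hv01 : E.δ 0 a = E.δ 1 t := by rw [← hS2, ← hS0]; exact ee02 S
  have hv02 : E.δ 0 b = E.δ 0 t := by rw [← hS1, ← hS0]; exact ee01 S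
  have hv03 : E.δ 1 b = E.δ 1 a := by rw [← hS1, ← hS2]; exact (ee12 S).symm
  -- Step T : Λ[3,1] fill in B
  have hc02 : B.δ 0 (B.σ 1 (p.app _ a)) = B.δ 1 Q1 := by
    rw [ds01, q11, ← papp_δ, ← papp_δ, hv01]
  have hc03 : B.δ 0 (p.app _ S) = B.δ 2 Q1 := by rw [q12, ← papp_δ, hS0]
  have hc23 : B.δ 2 (p.app _ S) = B.δ 2 (B.σ 1 (p.app _ a)) := by
    rw [ds21, ← papp_δ, hS2]
  obtain ⟨T, hT0, hT2, hT3⟩ :=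
    qcFill31 Q1 (B.σ 1 (p.app _ a)) (p.app _ S) hc02 hc03 hc23
  set v1 := B.δ 1 T with hv1def
  have hv10 : B.δ 0 v1 = g := by rw [hv1def, dd01, hT0, q10]
  have hv11 : B.δ 1 v1 = p.app _ a := by rw [hv1def, ← dd12, hT2, ds11]
  have hv12 : B.δ 2 v1 = p.app _ b := by rw [hv1def, ← dd13, hT3, ← papp_δ, hS1]
  -- Step ρ : cocartesian 2-fill over v1 (for ψ)
  obtain ⟨R, hR1, hR2, hRp⟩ :=
    cocartFill2 p ψ hψ a b v1 hv03 hv11.symm hv12.symm hbdef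
  set b' := E.δ 0 R with hb'def
  have hpb' : p.app _ b' = g := by rw [hb'def, papp_δ, hRp, hv10]
  have hv04 : E.δ 0 b' = E.δ 0 a := by rw [hb'def, ← ee01, hR1]
  -- Step W : cocartesian 3-fill over T (for χ)
  have wc12 : E.δ 1 (E.σ 1 a) = E.δ 1 R := by rw [ds11, hR1]
  have wc13 : E.δ 1 S = E.δ 2 R := by rw [hS1, hR2]
  have wc23 : E.δ 2 S = E.δ 2 (E.σ 1 a) := by rw [hS2, ds21]
  have wp1 : p.app _ R = B.δ 1 T := by rw [hRp, hv1def]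
  have wp2 : p.app _ (E.σ 1 a) = B.δ 2 T := by rw [papp_σ, hT2]
  have wp3 : p.app _ S = B.δ 3 T := hT3.symm
  have winit : E.δ 2 S = (SSet.yonedaEquiv (X := E)) χ := by rw [hS2, hadef]
  obtain ⟨W, hW1, hW2, hW3, hWp⟩ :=
    cocartFill3 p χ hχ R (E.σ 1 a) S T wc12 wc13 wc23 wp1 wp2 wp3 winit
  set s1' := E.δ 0 W with hs1'def
  have h2s1 : E.δ 2 s1' = t := by rw [hs1'def, ← dd03, hW3, hS0]
  have h0s1 : E.δ 0 s1' = b' := by rw [hs1'def, ← dd01, hW1, hb'def]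
  have h1s1 : E.δ 1 s1' = E.σ 0 (E.δ 0 a) := by rw [hs1'def, ← dd02, hW2, ds01]
  -- Step T2 : Λ[3,1] fill in B
  have hc02' : B.δ 0 (B.σ 1 (p.app _ b)) = B.δ 1 Q2 := by
    rw [ds01, q21, ← papp_δ, ← papp_δ, hv02]
  have hc03' : B.δ 0 v1 = B.δ 2 Q2 := by rw [hv10, q22]
  have hc23' : B.δ 2 v1 = B.δ 2 (B.σ 1 (p.app _ b)) := by rw [ds21, hv12]
  obtain ⟨T2, hT20, hT22, hT23⟩ :=
    qcFill31 Q2 (B.σ 1 (p.app _ b)) v1 hc02' hc03' hc23'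
  set v2 := B.δ 1 T2 with hv2def
  have hv20 : B.δ 0 v2 = p.app _ t := by rw [hv2def, dd01, hT20, q20]
  have hv21 : B.δ 1 v2 = p.app _ b := by rw [hv2def, ← dd12, hT22, ds11]
  have hv22 : B.δ 2 v2 = p.app _ a := by rw [hv2def, ← dd13, hT23, hv11]
  -- Step R2 : cocartesian 2-fill over v2 (for χ)
  obtain ⟨R2, hR21, hR22, hR2p⟩ :=
    cocartFill2 p χ hχ b a v2 hv03.symm hv21.symm hv22.symm hadef
  set b'' := E.δ 0 R2 with hb''def
  have hv05 : E.δ 1 b'' = E.δ 0 a := by rw [hb''def, ← ee02, hR22]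
  -- Step W2 : cocartesian 3-fill over T2 (for ψ)
  have w2c12 : E.δ 1 (E.σ 1 b) = E.δ 1 R2 := by rw [ds11, hR21]
  have w2c13 : E.δ 1 R = E.δ 2 R2 := by rw [hR1, hR22]
  have w2c23 : E.δ 2 R = E.δ 2 (E.σ 1 b) := by rw [hR2, ds21]
  have w2p1 : p.app _ R2 = B.δ 1 T2 := by rw [hR2p, hv2def]
  have w2p2 : p.app _ (E.σ 1 b) = B.δ 2 T2 := by rw [papp_σ, hT22]
  have w2p3 : p.app _ R = B.δ 3 T2 := by rw [hRp, hT23]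
  have w2init : E.δ 2 R = (SSet.yonedaEquiv (X := E)) ψ := by rw [hR2, hbdef]
  obtain ⟨W2, hW21, hW22, hW23, hW2p⟩ :=
    cocartFill3 p ψ hψ R2 (E.σ 1 b) R T2 w2c12 w2c13 w2c23 w2p1 w2p2 w2p3 w2init
  set s := E.δ 0 W2 with hsdef
  have hs2 : E.δ 2 s = b' := by rw [hsdef, ← dd03, hW23, hb'def]
  have hs0 : E.δ 0 s = b'' := by rw [hsdef, ← dd01, hW21, hb''def]
  have hs1 : E.δ 1 s = E.σ 0 (E.δ 0 b) := by rw [hsdef, ← dd02, hW22, ds01]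
  -- Step H : Λ[3,2] fill in E
  have jc01 : E.δ 0 (E.σ 0 b'') = E.δ 0 s := by rw [ds00, hs0]
  have jc03 : E.δ 0 s1' = E.δ 2 s := by rw [h0s1, hs2]
  have jc13 : E.δ 1 s1' = E.δ 2 (E.σ 0 b'') := by rw [h1s1, ds20, hv05]
  obtain ⟨Y6, hY60, hY61, hY63⟩ := qcFill32 s (E.σ 0 b'') s1' jc01 jc03 jc13
  set H := E.δ 2 Y6 with hHdef
  have hH0 : E.δ 0 H = E.σ 0 (E.δ 0 b) := by rw [hHdef, dd02, hY60, hs1]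
  have hH1 : E.δ 1 H = b'' := by rw [hHdef, dd12, hY61, ds10]
  have hH2 : E.δ 2 H = t := by rw [hHdef, ← dd23, hY63, h2s1]
  -- Step H' : Λ[3,2] fill in E
  have kc01 : E.δ 0 H = E.δ 0 (E.σ 1 t) := by rw [hH0, ds01, hv02]
  have kc03 : E.δ 0 (E.σ 0 t) = E.δ 2 (E.σ 1 t) := by rw [ds00, ds21]
  have kc13 : E.δ 1 (E.σ 0 t) = E.δ 2 H := by rw [ds10, hH2]
  obtain ⟨Y7, hY70, hY71, hY73⟩ := qcFill32 (E.σ 1 t) H (E.σ 0 t) kc01 kc03 kc13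
  set H' := E.δ 2 Y7 with hH'def
  have hH'0 : E.δ 0 H' = t := by rw [hH'def, dd02, hY70, ds11]
  have hH'1 : E.δ 1 H' = b'' := by rw [hH'def, dd12, hY71, hH1]
  have hH'2 : E.δ 2 H' = E.σ 0 (E.δ 1 t) := by rw [hH'def, ← dd23, hY73, ds20]
  -- Final Λ[3,1] fill in E
  have lc02 : E.δ 0 s = E.δ 1 H' := by rw [hs0, hH'1]
  have lc03 : E.δ 0 (E.σ 1 b') = E.δ 2 H' := by rw [ds01, hH'2, hv04, hv01]
  have lc23 : E.δ 2 (E.σ 1 b') = E.δ 2 s := by rw [ds21, hs2]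
  obtain ⟨Y8, hY80, hY82, hY83⟩ := qcFill31 H' s (E.σ 1 b') lc02 lc03 lc23
  set s2' := E.δ 1 Y8 with hs2'def
  have h2s2 : E.δ 2 s2' = b' := by rw [hs2'def, ← dd13, hY83, ds11]
  have h0s2 : E.δ 0 s2' = t := by rw [hs2'def, dd01, hY80, hH'0]
  have h1s2 : E.δ 1 s2' = E.σ 0 (E.δ 0 b) := by rw [hs2'def, ← dd12, hY82, hs1]
  -- assemble
  have hτy : τ = ((SSet.yonedaEquiv (X := E))).symm t := by rw [htdef, Equiv.symm_apply_apply]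
  refine ⟨((SSet.yonedaEquiv (X := E))).symm b', ((SSet.yonedaEquiv (X := E))).symm s1',
    ((SSet.yonedaEquiv (X := E))).symm s2', ?_, ?_, ?_, ?_, ?_, ?_⟩
  · rw [yE_symm_map]
    show ((SSet.yonedaEquiv (X := E))).symm (E.δ 2 s1') = τ
    rw [h2s1, hτy]
  · rw [yE_symm_map]
    show ((SSet.yonedaEquiv (X := E))).symm (E.δ 0 s1') = _
    rw [h0s1]
  · rw [hτy, yE_symm_map, yE_symm_map, yE_symm_map]
    apply congrArg
    show E.δ 1 s1' = E.σ 0 (E.δ 1 t)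
    rw [h1s1, hv01]
  · rw [yE_symm_map]
    show ((SSet.yonedaEquiv (X := E))).symm (E.δ 2 s2') = _
    rw [h2s2]
  · rw [yE_symm_map]
    show ((SSet.yonedaEquiv (X := E))).symm (E.δ 0 s2') = τ
    rw [h0s2, hτy]
  · rw [hτy, yE_symm_map, yE_symm_map, yE_symm_map]
    apply congrArg
    show E.δ 1 s2' = E.σ 0 (E.δ 0 t)
    rw [h1s2, hv02]
end
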